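/- arXiv:2207.05735 — 7 statements merged into one kernel-verified Lean document; each statement's English description precedes it below -/
import Mathlib

section
/- Let q, m, h be integers with q, h ≥ 2 and m ≥ 1, and let f: ℤ_q^m → ℤ_h be a map with f(0) = 0. Then f is a generalized bent function if and only if the coboundary matrix M_{∂f} = [ζ_h^{f(a+b)−f(a)−f(b)}]_{a,b ∈ ℤ_q^m} is a Butson Hadamard matrix in BH(q^m, h). -/
open scoped BigOperators

noncomputable section

/-- `zeta k` is the complex `k`-th root of unity `exp(2π√-1/k)`. -/
def zeta (k : ℕ) : ℂ := Complex.exp (2 * Real.pi * Complex.I / k)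

/-- Standard dot product of tuples, computed with representatives in `{0,…,q-1}`. -/
def dotv {m q : ℕ} (u v : Fin m → ZMod q) : ℕ := ∑ i, (u i).val * (v i).val

/-- The "Walsh" sum `Σ_{x ∈ ℤ_q^m} ζ_h^{f(x)} ζ_q^{-w·x}`. -/
def WS (q h : ℕ) {m : ℕ} [NeZero q] (f : (Fin m → ZMod q) → ZMod h)
    (w : Fin m → ZMod q) : ℂ :=
  ∑ x : Fin m → ZMod q, zeta h ^ (f x).val * zeta q ^ (-(dotv w x : ℤ))

/-- `f : ℤ_q^m → ℤ_h` is a generalized bent function (GBF). -/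
def IsGBF (q h : ℕ) {m : ℕ} [NeZero q] (f : (Fin m → ZMod q) → ZMod h) : Prop :=
  ∀ w : Fin m → ZMod q, (‖WS q h f w‖) ^ 2 = (q : ℝ) ^ m

/-- A Butson Hadamard matrix in `BH(n,k)`:  an `n × n` matrix with entries in
`⟨ζ_k⟩` such that `M M* = n Iₙ`. -/
def IsBH {ι : Type*} [Fintype ι] [DecidableEq ι] (n k : ℕ) (M : Matrix ι ι ℂ) : Prop :=
  Fintype.card ι = n ∧ (∀ a b, ∃ j : ℕ, M a b = zeta k ^ j) ∧
    M * M.conjTranspose = (n : ℂ) • (1 : Matrix ι ι ℂ)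

/-!
Put `φ = ζ_h^f` and let `A(d) = Σ_x φ(x + d) φ̄(x)` be its autocorrelation. Expanding the square,
`|Σ_x φ(x) ζ_q^{-w·x}|²` is the Fourier transform of `A` at `w`, so by Fourier inversion `f` is
bent iff `A` vanishes off `0` (where it always equals `q^m`). On the other side, the `(a, b)`
entry of `M_{∂φ} M_{∂φ}*` is `φ̄(a) φ(b) A(a - b)`, so `M_{∂φ}` is Butson Hadamard under the same
condition.
-/

open Finset ZMod ComplexConjugate Matrix

lemma AddChar.map_sum_eq_prod {A M ι : Type*} [AddCommMonoid A] [CommMonoid M] (ψ : AddChar A M)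
    (s : Finset ι) (a : ι → A) : ψ (∑ i ∈ s, a i) = ∏ i ∈ s, ψ (a i) :=
  map_prod ψ.toMonoidHom (fun i => Multiplicative.ofAdd (a i)) s

section RootsOfUnity

variable (k : ℕ) [NeZero k]

lemma zeta_zpow_eq_stdAddChar (n : ℤ) : zeta k ^ n = stdAddChar (n : ZMod k) := by
  rw [stdAddChar_coe, zeta, ← Complex.exp_int_mul]
  ring_nf

lemma zeta_pow_val_eq_stdAddChar (a : ZMod k) : zeta k ^ a.val = stdAddChar a := by
  rw [← zpow_natCast, zeta_zpow_eq_stdAddChar, Int.cast_natCast, natCast_zmod_val]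

end RootsOfUnity

lemma natCast_dotv {m q : ℕ} [NeZero q] (u v : Fin m → ZMod q) :
    (dotv u v : ZMod q) = u ⬝ᵥ v := by
  simp [dotv, dotProduct]

lemma WS_eq_sum_stdAddChar (q h : ℕ) {m : ℕ} [NeZero q] [NeZero h]
    (f : (Fin m → ZMod q) → ZMod h) (w : Fin m → ZMod q) :
    WS q h f w = ∑ x, stdAddChar (f x) * stdAddChar (-(w ⬝ᵥ x)) := by
  simp only [WS, zeta_pow_val_eq_stdAddChar, zeta_zpow_eq_stdAddChar, Int.cast_neg,
    Int.cast_natCast, natCast_dotv]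

section Autocorrelation

variable {G : Type*} [AddCommGroup G] [Fintype G]

def autocorr (φ : G → ℂ) (d : G) : ℂ := ∑ x, φ (x + d) * conj (φ x)

lemma autocorr_zero {φ : G → ℂ} (hφ : ∀ x, ‖φ x‖ = 1) : autocorr φ 0 = Fintype.card G := by
  simp [autocorr, Complex.mul_conj', hφ]

end Autocorrelation

section Fourier

variable {ι : Type*} [Fintype ι] [DecidableEq ι] {q : ℕ} [NeZero q]

lemma sum_stdAddChar_dotProduct (d : ι → ZMod q) :
    ∑ w : ι → ZMod q, stdAddChar (w ⬝ᵥ d) = if d = 0 then (q : ℂ) ^ Fintype.card ι else 0 := by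
  simp only [dotProduct, AddChar.map_sum_eq_prod]
  rw [← Fintype.prod_sum (fun i (c : ZMod q) => stdAddChar (c * d i))]
  simp only [AddChar.sum_mulShift _ (isPrimitive_stdAddChar q), ZMod.card]
  split_ifs with hd
  · simp [hd]
  · obtain ⟨i, hi⟩ := Function.ne_iff.mp hd
    exact prod_eq_zero (mem_univ i) (Nat.cast_eq_zero.mpr (if_neg hi))

lemma sum_fourier_mul_stdAddChar (A : (ι → ZMod q) → ℂ) (d' : ι → ZMod q) :
    ∑ w : ι → ZMod q, (∑ d, A d * stdAddChar (-(w ⬝ᵥ d))) * stdAddChar (w ⬝ᵥ d')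
      = (q : ℂ) ^ Fintype.card ι * A d' := by
  simp_rw [sum_mul, mul_assoc, ← AddChar.map_add_eq_mul, neg_add_eq_sub, ← dotProduct_sub]
  rw [sum_comm]
  simp_rw [← mul_sum, sum_stdAddChar_dotProduct, sub_eq_zero, mul_ite, mul_zero, sum_ite_eq,
    if_pos (mem_univ _), mul_comm]

lemma forall_fourier_eq_const_iff (A : (ι → ZMod q) → ℂ) (c : ℂ) :
    (∀ w : ι → ZMod q, ∑ d, A d * stdAddChar (-(w ⬝ᵥ d)) = c) ↔ A = Pi.single 0 c := by
  constructor
  · intro hA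
    funext d'
    have hq : (q : ℂ) ^ Fintype.card ι ≠ 0 := pow_ne_zero _ (Nat.cast_ne_zero.mpr (NeZero.ne q))
    apply mul_left_cancel₀ hq
    rw [← sum_fourier_mul_stdAddChar]
    simp_rw [hA, ← mul_sum, sum_stdAddChar_dotProduct, Pi.single_apply]
    split_ifs <;> ring
  · rintro rfl w
    simp [Pi.single_apply]

lemma fourier_mul_conj_fourier (φ : (ι → ZMod q) → ℂ) (w : ι → ZMod q) :
    (∑ x, φ x * stdAddChar (-(w ⬝ᵥ x))) * conj (∑ x, φ x * stdAddChar (-(w ⬝ᵥ x)))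
      = ∑ d, autocorr φ d * stdAddChar (-(w ⬝ᵥ d)) := by
  simp_rw [map_sum, map_mul, ← AddChar.map_neg_eq_conj, neg_neg, sum_mul_sum, autocorr, sum_mul]
  conv_lhs => rw [sum_comm]
  conv_rhs => rw [sum_comm]
  refine sum_congr rfl fun y _ => ?_
  symm
  refine Fintype.sum_equiv (Equiv.addLeft y) _ _ fun d => ?_
  have hchar : stdAddChar (-(w ⬝ᵥ (y + d))) * stdAddChar (w ⬝ᵥ y)
      = (stdAddChar (-(w ⬝ᵥ d)) : ℂ) := by
    rw [← AddChar.map_add_eq_mul, dotProduct_add]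
    congr 1
    ring
  rw [Equiv.coe_addLeft, ← hchar]
  ring

end Fourier

lemma isGBF_iff_autocorr_eq_single (q h : ℕ) {m : ℕ} [NeZero q] [NeZero h]
    (f : (Fin m → ZMod q) → ZMod h) :
    IsGBF q h f ↔ autocorr (fun x => stdAddChar (f x)) = Pi.single 0 ((q : ℂ) ^ m) := by
  rw [← forall_fourier_eq_const_iff]
  refine forall_congr' fun w => ?_
  rw [← fourier_mul_conj_fourier, ← WS_eq_sum_stdAddChar, Complex.mul_conj']
  norm_cast

section Coboundary

variable {G : Type*} [AddCommGroup G] [Fintype G]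

def coboundaryMatrix (φ : G → ℂ) : Matrix G G ℂ :=
  of fun a b => (φ a)⁻¹ * (φ b)⁻¹ * φ (a + b)

variable {φ : G → ℂ}

lemma coboundaryMatrix_mul_conjTranspose_apply (hφ : ∀ x, ‖φ x‖ = 1) (a b : G) :
    (coboundaryMatrix φ * (coboundaryMatrix φ)ᴴ) a b = conj (φ a) * φ b * autocorr φ (a - b) := by
  simp only [mul_apply, conjTranspose_apply, coboundaryMatrix, of_apply,
    Complex.inv_eq_conj (hφ _), star_mul', Complex.star_def, Complex.conj_conj, autocorr, mul_sum]
  refine Fintype.sum_equiv (Equiv.addLeft b) _ _ fun c => ?_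
  have hc : φ c * conj (φ c) = 1 := by rw [Complex.mul_conj', hφ]; simp
  rw [Equiv.coe_addLeft, show b + c + (a - b) = a + c by abel]
  linear_combination (conj (φ a) * φ b * φ (a + c) * conj (φ (b + c))) * hc

lemma coboundaryMatrix_mul_conjTranspose_eq_smul_one_iff [DecidableEq G]
    (hφ : ∀ x, ‖φ x‖ = 1) :
    coboundaryMatrix φ * (coboundaryMatrix φ)ᴴ = (Fintype.card G : ℂ) • 1 ↔
      autocorr φ = Pi.single 0 (Fintype.card G : ℂ) := by
  have hne : ∀ x, φ x ≠ 0 := fun x => norm_ne_zero_iff.mp (by simp [hφ])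
  constructor
  · intro hM
    funext d
    by_cases hd : d = 0
    · rw [hd, autocorr_zero hφ, Pi.single_eq_same]
    · have hentry := congrFun (congrFun hM d) 0
      rw [coboundaryMatrix_mul_conjTranspose_apply hφ, sub_zero] at hentry
      simp only [Matrix.smul_apply, one_apply_ne hd, smul_zero] at hentry
      rw [Pi.single_eq_of_ne hd]
      exact (mul_eq_zero.mp hentry).resolve_left
        (mul_ne_zero ((map_ne_zero _).mpr (hne d)) (hne 0))
  · intro hA
    ext a b
    simp only [coboundaryMatrix_mul_conjTranspose_apply hφ, hA, Pi.single_apply, sub_eq_zero,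
      Matrix.smul_apply, Matrix.one_apply]
    split_ifs with hab
    · rw [hab, Complex.conj_mul', hφ, Complex.ofReal_one, one_pow, one_mul, smul_eq_mul, mul_one]
    · rw [mul_zero, smul_zero]

end Coboundary

lemma coboundaryMatrix_stdAddChar {G : Type*} [AddCommGroup G] {h : ℕ} [NeZero h]
    (f : G → ZMod h) :
    coboundaryMatrix (fun x => stdAddChar (f x)) =
      of fun a b => zeta h ^ (f (a + b) - f a - f b).val := by
  ext a b
  simp only [coboundaryMatrix, of_apply, zeta_pow_val_eq_stdAddChar, AddChar.map_sub_eq_div]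
  ring

lemma isBH_card_of_zeta_pow_iff {ι : Type*} [Fintype ι] [DecidableEq ι] (k : ℕ)
    (e : ι → ι → ℕ) :
    IsBH (Fintype.card ι) k (of fun a b => zeta k ^ e a b) ↔
      (of fun a b => zeta k ^ e a b) * (of fun a b => zeta k ^ e a b)ᴴ =
        (Fintype.card ι : ℂ) • 1 := by
  simp [IsBH]

theorem isGBF_iff_coboundary_isBH_general
    (q m h : ℕ) [NeZero q] (hh : 2 ≤ h)
    (f : (Fin m → ZMod q) → ZMod h) :
    IsGBF q h f ↔
      IsBH (q ^ m) h
        (Matrix.of fun a b : Fin m → ZMod q =>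
          zeta h ^ (f (a + b) - f a - f b).val) := by
  have : NeZero h := ⟨by omega⟩
  have hcard : Fintype.card (Fin m → ZMod q) = q ^ m := by simp
  rw [isGBF_iff_autocorr_eq_single, ← hcard, isBH_card_of_zeta_pow_iff,
    ← coboundaryMatrix_stdAddChar,
    coboundaryMatrix_mul_conjTranspose_eq_smul_one_iff fun x => AddChar.norm_apply _ _, hcard]
  norm_cast

/-- `f` (normalized, `f 0 = 0`) is a generalized bent function iff
the coboundary matrix `M_{∂f} = [ζ_h^{f(a+b)-f(a)-f(b)}]` is in `BH(q^m, h)`. -/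
theorem isGBF_iff_coboundary_isBH
    (q m h : ℕ) [NeZero q] (hq : 2 ≤ q) (hh : 2 ≤ h) (hm : 1 ≤ m)
    (f : (Fin m → ZMod q) → ZMod h) (hf0 : f 0 = 0) :
    IsGBF q h f ↔
      IsBH (q ^ m) h
        (Matrix.of fun a b : Fin m → ZMod q =>
          zeta h ^ (f (a + b) - f a - f b).val) :=
  isGBF_iff_coboundary_isBH_general q m h hh f

end
end

section
/- Let φ: G → ℤ_h be an h-ary (s_1,…,s_m)-array with expansion φ': E → ℤ_h of type z. Then for every g = (g_1,…,g_m) ∈ L, the periodic autocorrelation satisfies AC_{φ'}(g) = ζ_h^{−b} · |E|, where b = Σ_i g_i/s_i. -/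
open scoped BigOperators

noncomputable section

/-- Periodic autocorrelation of a map `f : A → ℤ_h` at shift `w`. -/
def AC {A : Type*} [AddCommGroup A] [Fintype A] (h : ℕ) (f : A → ZMod h) (w : A) : ℂ :=
  ∑ g : A, zeta h ^ (f g - f (g + w)).val

/-- The expansion `φ' : E → ℤ_h` of type `z` of an `h`-ary array `φ`:
`φ'(g) = φ(g mod s) + Σ_i ⌊g_i / s_i⌋ (mod h)`. -/
def expand (m h : ℕ) (s z : Fin m → ℕ) (φ : (∀ i, ZMod (s i)) → ZMod h)
    (g : ∀ i, ZMod ((z i * (h - 1) + 1) * s i)) : ZMod h :=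
  φ (fun i => ((g i).val : ZMod (s i))) + ((∑ i, (g i).val / s i : ℕ) : ZMod h)

/-- The subgroup(-set) `L ⊆ E`. -/
def LSet (m h : ℕ) (s z : Fin m → ℕ) :
    Set (∀ i, ZMod ((z i * (h - 1) + 1) * s i)) :=
  {g | ∀ i, s i ∣ (g i).val ∧ (z i = 0 → (g i).val = 0)}

lemma zpow_eq_of_dvd_sub {ζ : ℂ} (hζ : ζ ≠ 0) {h : ℕ} (h1 : ζ ^ h = 1) {a c : ℤ}
    (hac : (h : ℤ) ∣ a - c) : ζ ^ a = ζ ^ c := by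
  obtain ⟨k, hk⟩ := hac
  have ha : a = c + h * k := by linarith
  rw [ha, zpow_add₀ hζ, zpow_mul, zpow_natCast, h1, one_zpow, mul_one]

lemma key_div {h s c : ℕ} (v w : ℕ) (hv : v < c * s) (hw : w < c * s) (hws : s ∣ w)
    (hc : c = 1 ∨ c = h) :
    ((((v + w) % (c * s)) / s : ℕ) : ZMod h) = ((v / s + w / s : ℕ) : ZMod h) := by
  obtain ⟨k, rfl⟩ := hws
  have hs : 0 < s := by
    rcases Nat.eq_zero_or_pos s with h0 | h0
    · subst h0; simp at hv
    · exact h0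
  have hk0 : k < c := by
    rcases Nat.eq_zero_or_pos k with rfl | hk
    · rcases Nat.eq_zero_or_pos c with rfl | hc0
      · simp at hv
      · exact hc0
    · by_contra hcon
      push_neg at hcon
      have : c * s ≤ s * k := by
        calc c * s ≤ k * s := Nat.mul_le_mul_right s hcon
        _ = s * k := Nat.mul_comm _ _
      omega
  have hdiv : (v + s * k) / s = v / s + k := Nat.add_mul_div_left _ _ hs
  have hk' : (s * k) / s = k := Nat.mul_div_cancel_left _ hs
  by_cases hlt : v + s * k < c * s
  · rw [Nat.mod_eq_of_lt hlt, hdiv, hk']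
  · push_neg at hlt
    have hmod : (v + s * k) % (c * s) = v + s * k - c * s := by
      rw [Nat.mod_eq_sub_mod hlt, Nat.mod_eq_of_lt (by omega)]
    rcases hc with rfl | rfl
    · -- c = 1 : impossible since k < 1 means k = 0
      have : k = 0 := by omega
      subst this
      simp at hlt
      omega
    · -- c = h
      have hcs : c * s = s * c := Nat.mul_comm c s
      have haa : (v + s * k - c * s) + s * c = v + s * k := by omega
      have e1 : ((v + s * k - c * s) + s * c) / s = (v + s * k - c * s) / s + c :=
        Nat.add_mul_div_left _ c hs
      rw [haa, hdiv] at e1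
      rw [hmod, hk']
      have h3 : (v + s * k - c * s) / s = v / s + k - c :=
        Nat.eq_sub_of_add_eq e1.symm
      have hge : c ≤ v / s + k := by
        rw [e1]; exact Nat.le_add_left c _
      rw [h3, Nat.cast_sub hge]
      simp

lemma key_mod {n s : ℕ} (hsn : s ∣ n) (v w : ℕ) (hws : s ∣ w) :
    (((v + w) % n : ℕ) : ZMod s) = ((v : ℕ) : ZMod s) := by
  have h1 : (v + w) % n ≡ v + w [MOD s] := Nat.mod_mod_of_dvd (v + w) hsn
  have h2 : v + w ≡ v + 0 [MOD s] :=
    (Nat.ModEq.refl v).add ((Nat.modEq_zero_iff_dvd).2 hws)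
  have := h1.trans h2
  rw [Nat.add_zero] at this
  exact (ZMod.natCast_eq_natCast_iff _ _ _).2 this

lemma expand_add (m h : ℕ) (hh : 2 ≤ h) (s z : Fin m → ℕ)
    (hs : ∀ i, 1 < s i) (hz : ∀ i, z i ≤ 1)
    [inst : ∀ i, NeZero ((z i * (h - 1) + 1) * s i)]
    (φ : (∀ i, ZMod (s i)) → ZMod h)
    (g : ∀ i, ZMod ((z i * (h - 1) + 1) * s i)) (hg : g ∈ LSet m h s z)
    (x : ∀ i, ZMod ((z i * (h - 1) + 1) * s i)) :
    expand m h s z φ (x + g)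
      = expand m h s z φ x + ((∑ i, (g i).val / s i : ℕ) : ZMod h) := by
  have hval : ∀ i, ((x + g) i).val = ((x i).val + (g i).val) % ((z i * (h - 1) + 1) * s i) := by
    intro i
    rw [Pi.add_apply, ZMod.val_add]
  have hc : ∀ i, z i * (h - 1) + 1 = 1 ∨ z i * (h - 1) + 1 = h := by
    intro i
    rcases Nat.le_one_iff_eq_zero_or_eq_one.1 (hz i) with h0 | h1
    · left; rw [h0]; ring
    · right; rw [h1]; omega
  have harg : (fun i => (((x + g) i).val : ZMod (s i)))
      = (fun i => (((x i).val : ZMod (s i)))) := by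
    funext i
    rw [hval i]
    exact key_mod (dvd_mul_left _ _) _ _ (hg i).1
  have hdivsum : ((∑ i, ((x + g) i).val / s i : ℕ) : ZMod h)
      = ((∑ i, (x i).val / s i : ℕ) : ZMod h) + ((∑ i, (g i).val / s i : ℕ) : ZMod h) := by
    push_cast
    rw [← Finset.sum_add_distrib]
    refine Finset.sum_congr rfl fun i _ => ?_
    rw [hval i]
    have := key_div (h := h) ((x i).val) ((g i).val) (ZMod.val_lt _) (ZMod.val_lt _)
      (hg i).1 (hc i)
    push_cast at this
    exact this
  unfold expand
  rw [harg, hdivsum]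
  ring

/-- for every `g ∈ L`, `AC_{φ'}(g) = ζ_h^{-b}·|E|` where `b = Σ_i g_i/s_i`. -/
theorem AC_expand_of_mem_L
    (m h : ℕ) (hh : 2 ≤ h) (s z : Fin m → ℕ) (hs : ∀ i, 1 < s i) (hz : ∀ i, z i ≤ 1)
    [∀ i, NeZero ((z i * (h - 1) + 1) * s i)]
    (φ : (∀ i, ZMod (s i)) → ZMod h)
    (g : ∀ i, ZMod ((z i * (h - 1) + 1) * s i)) (hg : g ∈ LSet m h s z) :
    AC h (expand m h s z φ) g
      = zeta h ^ (-((∑ i, (g i).val / s i : ℕ) : ℤ))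
          * (Fintype.card (∀ i, ZMod ((z i * (h - 1) + 1) * s i)) : ℂ) := by
  have hne : NeZero h := ⟨by omega⟩
  set b : ℕ := ∑ i, (g i).val / s i with hb
  have hpt : ∀ x, expand m h s z φ x - expand m h s z φ (x + g) = -(b : ZMod h) := by
    intro x
    rw [expand_add m h hh s z hs hz φ g hg x]
    ring
  have hζ0 : zeta h ≠ 0 := Complex.exp_ne_zero _
  have hζh : zeta h ^ h = 1 :=
    (Complex.isPrimitiveRoot_exp h (by omega)).pow_eq_one
  have hsum : AC h (expand m h s z φ) g
      = (Fintype.card (∀ i, ZMod ((z i * (h - 1) + 1) * s i)) : ℂ)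
          * zeta h ^ ((-(b : ZMod h)).val) := by
    unfold AC
    rw [Finset.sum_congr rfl fun x _ => by rw [hpt x]]
    rw [Finset.sum_const, Finset.card_univ, nsmul_eq_mul]
  rw [hsum]
  have hz1 : (zeta h : ℂ) ^ ((-(b : ZMod h)).val) = zeta h ^ (-(b : ℤ)) := by
    rw [← zpow_natCast]
    refine zpow_eq_of_dvd_sub hζ0 hζh ?_
    have : ((((-(b : ZMod h)).val : ℤ) - (-(b : ℤ)) : ℤ) : ZMod h) = 0 := by
      push_cast
      rw [ZMod.natCast_val, ZMod.cast_id]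
      ring
    exact (ZMod.intCast_zmod_eq_zero_iff_dvd _ _).1 this
  rw [hz1]
  ring

end
end

section
/- Let h ≥ 2, let s = (s_1,…,s_m) with each s_i > 1, let G = ℤ_{s_1}×⋯×ℤ_{s_m}, and let z ∈ {0,1}^m. Then: (i) the cocycle μ_z extracted from the short exact sequence 1 → ⟨ζ_h⟩ → E/K → G → 0 via the transversal τ(x) = x + K (so μ_z(x,y) = ι⁻¹(τ(x) + τ(y) − τ(x+y))) satisfies μ_z(x,y) = Π_{i : z_i = 1} γ_{s_i}(x_i, y_i); and (ii) μ_z is a coboundary in Z²(G, ⟨ζ_h⟩) if and only if s_i is coprime to h whenever z_i = 1. -/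
open scoped BigOperators Pointwise

noncomputable section

private theorem cast_val_mod {n t : ℕ} (hd : t ∣ n) (X : ℕ) :
    ((X % n : ℕ) : ZMod t) = (X : ZMod t) := by
  conv_rhs => rw [← Nat.div_add_mod X n]
  push_cast
  rw [(ZMod.natCast_eq_zero_iff n t).2 hd]
  ring

/-- `L` as a subgroup of `E`. -/
def Lsub (m h : ℕ) (s z : Fin m → ℕ)
    [∀ i, NeZero ((z i * (h - 1) + 1) * s i)] :
    AddSubgroup (∀ i, ZMod ((z i * (h - 1) + 1) * s i)) where
  carrier := LSet m h s z
  zero_mem' := by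
    intro i
    simp [ZMod.val_zero]
  add_mem' := by
    rintro a b ha hb i
    obtain ⟨ha1, ha2⟩ := ha i
    obtain ⟨hb1, hb2⟩ := hb i
    have hval : ((a + b) i).val = ((a i).val + (b i).val) % ((z i * (h - 1) + 1) * s i) :=
      ZMod.val_add _ _
    constructor
    · rw [hval]
      exact (Nat.dvd_mod_iff (dvd_mul_left _ _)).2 (Nat.dvd_add ha1 hb1)
    · intro hzi
      rw [hval, ha2 hzi, hb2 hzi]
      simp
  neg_mem' := by
    rintro a ha i
    obtain ⟨ha1, ha2⟩ := ha i
    have hval : ((-a) i).val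
        = if a i = 0 then 0 else (z i * (h - 1) + 1) * s i - (a i).val :=
      ZMod.neg_val _
    constructor
    · rw [hval]
      split
      · exact dvd_zero _
      · exact Nat.dvd_sub (dvd_mul_left _ _) ha1
    · intro hzi
      rw [hval]
      have : a i = 0 := (ZMod.val_eq_zero _).1 (ha2 hzi)
      simp [this]

/-- `K = {g ∈ L : Σ_i g_i/s_i ≡ 0 (mod h)}` as a subgroup of `E`. -/
def Ksub (m h : ℕ) (s z : Fin m → ℕ)
    [∀ i, NeZero ((z i * (h - 1) + 1) * s i)]
    (hh : 2 ≤ h) (hs : ∀ i, 1 < s i) (hz : ∀ i, z i ≤ 1) :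
    AddSubgroup (∀ i, ZMod ((z i * (h - 1) + 1) * s i)) where
  carrier := {g | g ∈ LSet m h s z ∧ (h : ℕ) ∣ ∑ i, (g i).val / s i}
  zero_mem' := by
    refine ⟨(Lsub m h s z).zero_mem', ?_⟩
    simp [ZMod.val_zero]
  add_mem' := by
    rintro a b ⟨haL, haS⟩ ⟨hbL, hbS⟩
    refine ⟨(Lsub m h s z).add_mem' haL hbL, ?_⟩
    rw [← ZMod.natCast_eq_zero_iff] at haS hbS ⊢
    rw [Nat.cast_sum] at haS hbS ⊢
    have key : ∀ i, ((((a + b) i).val / s i : ℕ) : ZMod h)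
        = (((a i).val / s i : ℕ) : ZMod h) + (((b i).val / s i : ℕ) : ZMod h) := by
      intro i
      have hzi : z i = 0 ∨ z i = 1 := by have := hz i; omega
      have hval : ((a + b) i).val = ((a i).val + (b i).val) % ((z i * (h - 1) + 1) * s i) :=
        ZMod.val_add _ _
      rcases hzi with h0 | h1
      · have ha0 := (haL i).2 h0
        have hb0 := (hbL i).2 h0
        rw [hval, ha0, hb0]
        simp
      · have hc : z i * (h - 1) + 1 = h := by rw [h1]; omega
        obtain ⟨α, hα⟩ := (haL i).1
        obtain ⟨β, hβ⟩ := (hbL i).1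
        have hspos : 0 < s i := by have := hs i; omega
        rw [hval, Nat.mod_mul_left_div_self, hα, hβ, ← Nat.mul_add,
          Nat.mul_div_cancel_left _ hspos, Nat.mul_div_cancel_left _ hspos,
          Nat.mul_div_cancel_left _ hspos, hc, ZMod.natCast_mod, Nat.cast_add]
    rw [Finset.sum_congr rfl fun i _ => key i, Finset.sum_add_distrib, haS, hbS, add_zero]
  neg_mem' := by
    rintro a ⟨haL, haS⟩
    refine ⟨(Lsub m h s z).neg_mem' haL, ?_⟩
    rw [← ZMod.natCast_eq_zero_iff] at haS ⊢
    rw [Nat.cast_sum] at haS ⊢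
    have key : ∀ i, ((((-a) i).val / s i : ℕ) : ZMod h)
        = -(((a i).val / s i : ℕ) : ZMod h) := by
      intro i
      have hzi : z i = 0 ∨ z i = 1 := by have := hz i; omega
      have hval : ((-a) i).val
          = if a i = 0 then 0 else (z i * (h - 1) + 1) * s i - (a i).val :=
        ZMod.neg_val _
      by_cases h0 : a i = 0
      · rw [hval, if_pos h0, h0]
        simp [ZMod.val_zero]
      · rcases hzi with hz0 | hz1
        · exact absurd ((ZMod.val_eq_zero _).1 ((haL i).2 hz0)) h0
        · have hc : z i * (h - 1) + 1 = h := by rw [hz1]; omega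
          obtain ⟨α, hα⟩ := (haL i).1
          have hspos : 0 < s i := by have := hs i; omega
          have hlt : (a i).val < (z i * (h - 1) + 1) * s i := ZMod.val_lt _
          have hαle : α ≤ z i * (h - 1) + 1 := by
            rw [hα, mul_comm (z i * (h - 1) + 1) (s i)] at hlt
            have := Nat.lt_of_mul_lt_mul_left hlt
            omega
          have hsub : (z i * (h - 1) + 1) * s i - (a i).val
              = s i * ((z i * (h - 1) + 1) - α) := by
            rw [hα, mul_comm (z i * (h - 1) + 1) (s i)]
            exact (Nat.mul_sub _ _ _).symm
          rw [hval, if_neg h0, hsub, Nat.mul_div_cancel_left _ hspos, hα,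
            Nat.mul_div_cancel_left _ hspos, Nat.cast_sub hαle, hc]
          simp
    rw [Finset.sum_congr rfl fun i _ => key i, Finset.sum_neg_distrib, haS, neg_zero]

/-- The reduction-mod-`s` homomorphism `E →+ G`. -/
def resHom (m h : ℕ) (s z : Fin m → ℕ)
    [∀ i, NeZero ((z i * (h - 1) + 1) * s i)] :
    (∀ i, ZMod ((z i * (h - 1) + 1) * s i)) →+ (∀ i, ZMod (s i)) where
  toFun g i := ((g i).val : ZMod (s i))
  map_zero' := by
    funext i
    simp [ZMod.val_zero]
  map_add' a b := by
    funext i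
    show (((a i + b i)).val : ZMod (s i)) = ((a i).val : ZMod (s i)) + ((b i).val : ZMod (s i))
    rw [ZMod.val_add, cast_val_mod (dvd_mul_left _ _), Nat.cast_add]

/-- The homomorphism `β : E/K → G` induced by reduction mod `s`. -/
def betaHom (m h : ℕ) (s z : Fin m → ℕ)
    [∀ i, NeZero ((z i * (h - 1) + 1) * s i)]
    (hh : 2 ≤ h) (hs : ∀ i, 1 < s i) (hz : ∀ i, z i ≤ 1) :
    (∀ i, ZMod ((z i * (h - 1) + 1) * s i)) ⧸ Ksub m h s z hh hs hz →+ (∀ i, ZMod (s i)) :=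
  QuotientAddGroup.lift (Ksub m h s z hh hs hz) (resHom m h s z) (by
    intro g hg
    funext i
    exact (ZMod.natCast_eq_zero_iff _ _).2 ((hg.1 i).1))

/-- The transversal map `τ : G → E/K`, `τ(x) = x + K`
(embedding `x` with representatives `0 ≤ x_i < s_i`). -/
def tau (m h : ℕ) (s z : Fin m → ℕ)
    [∀ i, NeZero ((z i * (h - 1) + 1) * s i)]
    (hh : 2 ≤ h) (hs : ∀ i, 1 < s i) (hz : ∀ i, z i ≤ 1)
    (x : ∀ i, ZMod (s i)) :
    (∀ i, ZMod ((z i * (h - 1) + 1) * s i)) ⧸ Ksub m h s z hh hs hz :=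
  QuotientAddGroup.mk (fun i => (((x i).val : ℕ) : ZMod ((z i * (h - 1) + 1) * s i)))

/-- The injection `ι : ⟨ζ_h⟩ ≅ ℤ_h → E/K`, sending `ζ_h^j` to
`j • ((0,…,0,s_{i₀},0,…,0) + K)` for the fixed index `i₀` with `z i₀ = 1`. -/
def iota (m h : ℕ) (s z : Fin m → ℕ)
    [∀ i, NeZero ((z i * (h - 1) + 1) * s i)]
    (hh : 2 ≤ h) (hs : ∀ i, 1 < s i) (hz : ∀ i, z i ≤ 1)
    (i₀ : Fin m) (j : ZMod h) :
    (∀ i, ZMod ((z i * (h - 1) + 1) * s i)) ⧸ Ksub m h s z hh hs hz :=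
  j.val • (QuotientAddGroup.mk
    (Pi.single i₀ ((s i₀ : ℕ) : ZMod ((z i₀ * (h - 1) + 1) * s i₀))))

/-- `R` is a `(v,n,k,λ)`-relative difference set in the additive group `E`
relative to the (forbidden) subgroup `N`. -/
def IsAddRDS {E : Type*} [AddGroup E] (N : AddSubgroup E) (R : Set E)
    (v n k l : ℕ) : Prop :=
  N.index = v ∧ Nat.card N = n ∧ Nat.card R = k ∧
    (∀ r ∈ R, ∀ r' ∈ R, r - r' ∈ N → r = r') ∧
    ∀ x : E, x ∉ N → Nat.card {p : R × R // (p.1 : E) - (p.2 : E) = x} = l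

end

/-!
Writing `c_i = ⌊(x_i + y_i)/s_i⌋` for the carries, `τ(x) + τ(y) - τ(x + y)` is the class of the
element `(c_i s_i)_i` of `L`, and two such elements `(a_i s_i)_i`, `(b_i s_i)_i` agree modulo `K`
exactly when `Σ_{z_i = 1} a_i ≡ Σ_{z_i = 1} b_i (mod h)`; this gives both the injectivity of `ι`
and the formula for `μ_z`.

The cocycle `μ_z` is a sum of the carry cocycles of the factors `ℤ_{s_i}`. If `s` is invertible
mod `h`, the carry of `ℤ_s` is the coboundary of `a ↦ -s⁻¹ a`. Conversely, if the carry equals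
`g(a + b) - g(a) - g(b)`, summing over `a` with `b = 1` gives `1 = -s g(1)` in `ℤ_h`, since exactly
one `a` produces a carry; so `s` is a unit mod `h`.
-/

theorem zeta_pow_eq_zeta_pow_iff {h : ℕ} (hh : h ≠ 0) {a b : ℕ} :
    zeta h ^ a = zeta h ^ b ↔ (a : ZMod h) = b := by
  have hprim : IsPrimitiveRoot (zeta h) h := Complex.isPrimitiveRoot_exp h hh
  rw [(hprim.isOfFinOrder hh).pow_inj_mod, ← hprim.eq_orderOf, ZMod.natCast_eq_natCast_iff']

namespace ZMod

theorem val_add_add_mul_div {n : ℕ} [NeZero n] (a b : ZMod n) :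
    (a + b).val + n * ((a.val + b.val) / n) = a.val + b.val := by
  rw [val_add, Nat.mod_add_div]

theorem val_intCast_mul_of_eq_mul {N s h : ℕ} [NeZero N] (hN : N = s * h) (c : ℤ) :
    ((s * c : ℤ) : ZMod N).val = s * (c : ZMod h).val := by
  subst hN
  have : NeZero s := ⟨left_ne_zero_of_mul (NeZero.ne (s * h))⟩
  have : NeZero h := ⟨right_ne_zero_of_mul (NeZero.ne (s * h))⟩
  refine Int.natCast_inj.1 ?_
  rw [val_intCast, Nat.cast_mul, Nat.cast_mul, val_intCast,
    Int.mul_emod_mul_of_pos _ _ (by exact_mod_cast NeZero.pos s)]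

theorem sum_val_add_one_div (s : ℕ) [NeZero s] : ∑ a : ZMod s, (a.val + 1) / s = 1 := by
  have hs := NeZero.pos s
  rw [Finset.sum_eq_single ((s - 1 : ℕ) : ZMod s)]
  · rw [val_natCast_of_lt (by omega), Nat.sub_add_cancel hs, Nat.div_self hs]
  · intro a _ ha
    have : a.val ≠ s - 1 := fun h => ha (by rw [← h, natCast_zmod_val])
    exact Nat.div_eq_of_lt (by have := a.val_lt; omega)
  · simp

end ZMod

theorem carry_eq_inv_mul_of_coprime {s h : ℕ} [NeZero s] (hsh : s.Coprime h) (a b : ZMod s) :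
    (((a.val + b.val) / s : ℕ) : ZMod h) = (s : ZMod h)⁻¹ * (a.val + b.val - (a + b).val) := by
  have key := congrArg (Nat.cast : ℕ → ZMod h) (ZMod.val_add_add_mul_div a b)
  have hinv := ZMod.coe_mul_inv_eq_one s hsh
  push_cast at key
  linear_combination (s : ZMod h)⁻¹ * key - (((a.val + b.val) / s : ℕ) : ZMod h) * hinv

theorem coprime_of_carry_eq_coboundary {s h : ℕ} (hs : 1 < s) (g : ZMod s → ZMod h)
    (hg : ∀ a b : ZMod s, (((a.val + b.val) / s : ℕ) : ZMod h) = g (a + b) - g a - g b) :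
    s.Coprime h := by
  have : Fact (1 < s) := ⟨hs⟩
  have hshift : ∑ a : ZMod s, g (a + 1) = ∑ a, g a :=
    Fintype.sum_equiv (Equiv.addRight 1) _ _ fun _ => rfl
  have hsum : ∑ a : ZMod s, (g (a + 1) - g a - g 1) = -(s * g 1) := by
    rw [Finset.sum_sub_distrib, Finset.sum_sub_distrib, hshift,
      sub_self, Finset.sum_const, Finset.card_univ, ZMod.card, nsmul_eq_mul, zero_sub]
  have hone : (1 : ZMod h) = -(s * g 1) := by
    rw [← hsum, ← Finset.sum_congr rfl fun a _ => hg a 1, ← Nat.cast_sum, ZMod.val_one,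
      ZMod.sum_val_add_one_div, Nat.cast_one]
  exact (ZMod.isUnit_iff_coprime s h).1 (.of_mul_eq_one (-g 1) (by linear_combination -hone))

theorem exists_coboundary_eq_sum_carry_iff {ι : Type*} [Fintype ι] [DecidableEq ι]
    {s : ι → ℕ} {h : ℕ} (hs : ∀ i, 1 < s i) (p : ι → Prop) [DecidablePred p] :
    (∃ f : (∀ i, ZMod (s i)) → ZMod h, f 0 = 0 ∧ ∀ x y : ∀ i, ZMod (s i),
        ((∑ i, if p i then ((x i).val + (y i).val) / s i else 0 : ℕ) : ZMod h)
          = f (x + y) - f x - f y)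
      ↔ ∀ i, p i → (s i).Coprime h := by
  have : ∀ i, NeZero (s i) := fun i => ⟨by have := hs i; omega⟩
  constructor
  · rintro ⟨f, -, hf⟩ i hi
    refine coprime_of_carry_eq_coboundary (hs i) (fun a => f (Pi.single i a)) fun a b => ?_
    rw [Pi.single_add, ← hf, Finset.sum_eq_single i]
    · simp [hi]
    · intro j _ hj
      simp [Pi.single_eq_of_ne hj]
    · simp
  · intro hcop
    refine ⟨fun x => -∑ i with p i, (s i : ZMod h)⁻¹ * (x i).val, by simp, fun x y => ?_⟩
    rw [← Finset.sum_filter, Nat.cast_sum, Finset.sum_congr rfl fun i hi =>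
      carry_eq_inv_mul_of_coprime (hcop i (Finset.mem_filter.1 hi).2) (x i) (y i)]
    simp only [Pi.add_apply, mul_sub, mul_add, Finset.sum_sub_distrib, Finset.sum_add_distrib]
    ring

section Extension

variable {m h : ℕ} {s z : Fin m → ℕ}

/-- The element `(c_i s_i)_i` of `E`. It lies in `L`: a coordinate with `z_i = 0` lives in
`ℤ_{s_i}`, where `c_i s_i = 0`. -/
def lvec (h : ℕ) (s z : Fin m → ℕ) (c : Fin m → ℤ) : ∀ i, ZMod ((z i * (h - 1) + 1) * s i) :=
  fun i => ((s i * c i : ℤ) : ZMod ((z i * (h - 1) + 1) * s i))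

theorem lvec_sub (a b : Fin m → ℤ) : lvec h s z (b - a) = lvec h s z b - lvec h s z a := by
  funext i
  simp only [lvec, Pi.sub_apply]
  push_cast
  ring

variable [∀ i, NeZero ((z i * (h - 1) + 1) * s i)]

theorem val_lvec_apply (hh : h ≠ 0) (hz : ∀ i, z i ≤ 1) (c : Fin m → ℤ) (i : Fin m) :
    (lvec h s z c i).val = if z i = 1 then s i * (c i : ZMod h).val else 0 := by
  rcases Nat.le_one_iff_eq_zero_or_eq_one.1 (hz i) with hzi | hzi
  · rw [if_neg (by omega), ZMod.val_eq_zero, lvec, ZMod.intCast_zmod_eq_zero_iff_dvd, hzi]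
    simp
  · rw [if_pos hzi]
    refine ZMod.val_intCast_mul_of_eq_mul ?_ _
    rw [hzi, one_mul, Nat.sub_add_cancel (Nat.one_le_iff_ne_zero.2 hh), mul_comm]

variable (hh : 2 ≤ h) (hs : ∀ i, 1 < s i) (hz : ∀ i, z i ≤ 1)

theorem lvec_mem_Ksub_iff (c : Fin m → ℤ) :
    lvec h s z c ∈ Ksub m h s z hh hs hz ↔ ∑ i with z i = 1, (c i : ZMod h) = 0 := by
  have : NeZero h := ⟨by omega⟩
  have hL : lvec h s z c ∈ LSet m h s z := fun i => by
    rw [val_lvec_apply (by omega) hz]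
    split_ifs with hzi
    · exact ⟨dvd_mul_right _ _, by omega⟩
    · exact ⟨dvd_zero _, fun _ => rfl⟩
  have hquot : ∀ i, (((lvec h s z c i).val / s i : ℕ) : ZMod h)
      = if z i = 1 then (c i : ZMod h) else 0 := fun i => by
    rw [val_lvec_apply (by omega) hz]
    split_ifs
    · rw [Nat.mul_div_cancel_left _ (by have := hs i; omega), ZMod.natCast_zmod_val]
    · simp
  change _ ∧ _ ↔ _
  rw [and_iff_right hL, ← ZMod.natCast_eq_zero_iff, Nat.cast_sum, Finset.sum_filter]
  simp only [hquot]

theorem mk_lvec_eq_mk_lvec_iff (a b : Fin m → ℤ) :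
    (QuotientAddGroup.mk (lvec h s z a) : _ ⧸ Ksub m h s z hh hs hz) =
        QuotientAddGroup.mk (lvec h s z b) ↔
      ∑ i with z i = 1, (a i : ZMod h) = ∑ i with z i = 1, (b i : ZMod h) := by
  rw [QuotientAddGroup.eq, neg_add_eq_sub, ← lvec_sub, lvec_mem_Ksub_iff]
  simp only [Pi.sub_apply, Int.cast_sub, Finset.sum_sub_distrib]
  rw [sub_eq_zero, eq_comm]

theorem tau_add_tau_sub_tau_eq_mk_lvec (x y : ∀ i, ZMod (s i)) :
    tau m h s z hh hs hz x + tau m h s z hh hs hz y - tau m h s z hh hs hz (x + y) =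
      QuotientAddGroup.mk (lvec h s z fun i => (((x i).val + (y i).val) / s i : ℕ)) := by
  have : ∀ i, NeZero (s i) := fun i => ⟨by have := hs i; omega⟩
  rw [tau, tau, tau, ← QuotientAddGroup.mk_add, ← QuotientAddGroup.mk_sub]
  congr 1
  funext i
  have key := congrArg (Nat.cast : ℕ → ZMod ((z i * (h - 1) + 1) * s i))
    (ZMod.val_add_add_mul_div (x i) (y i))
  simp only [Pi.add_apply, Pi.sub_apply, lvec, Int.cast_mul, Int.cast_natCast]
  push_cast at key
  linear_combination -key

theorem iota_eq_mk_lvec (i₀ : Fin m) (j : ZMod h) :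
    iota m h s z hh hs hz i₀ j = QuotientAddGroup.mk (lvec h s z (Pi.single i₀ (j.val : ℤ))) := by
  rw [iota, ← QuotientAddGroup.mk_nsmul]
  congr 1
  funext i
  rcases eq_or_ne i i₀ with rfl | hi
  · simp [lvec, mul_comm]
  · simp [lvec, hi]

theorem sum_intCast_single {i₀ : Fin m} (hi₀ : z i₀ = 1) (j : ℕ) :
    ∑ i with z i = 1, (((Pi.single i₀ (j : ℤ) : Fin m → ℤ) i : ℤ) : ZMod h) = j := by
  rw [Finset.sum_eq_single_of_mem i₀ (by simp [hi₀]) fun i _ hi => by simp [hi]]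
  simp

theorem iota_injective {i₀ : Fin m} (hi₀ : z i₀ = 1) :
    Function.Injective (iota m h s z hh hs hz i₀) := by
  have : NeZero h := ⟨by omega⟩
  intro j j' hjj'
  rw [iota_eq_mk_lvec, iota_eq_mk_lvec, mk_lvec_eq_mk_lvec_iff] at hjj'
  rwa [sum_intCast_single hi₀, sum_intCast_single hi₀, ZMod.natCast_zmod_val,
    ZMod.natCast_zmod_val] at hjj'

theorem tau_add_tau_sub_tau_eq_iota {i₀ : Fin m} (hi₀ : z i₀ = 1) (x y : ∀ i, ZMod (s i)) :
    tau m h s z hh hs hz x + tau m h s z hh hs hz y - tau m h s z hh hs hz (x + y) =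
      iota m h s z hh hs hz i₀
        (((∑ i, if z i = 1 then ((x i).val + (y i).val) / s i else 0 : ℕ)) : ZMod h) := by
  have : NeZero h := ⟨by omega⟩
  rw [tau_add_tau_sub_tau_eq_mk_lvec, iota_eq_mk_lvec, mk_lvec_eq_mk_lvec_iff,
    sum_intCast_single hi₀, ZMod.natCast_zmod_val, ← Finset.sum_filter, Nat.cast_sum]
  simp only [Int.cast_natCast]

end Extension

/-- (i) the cocycle `μ_z` extracted from the short exact sequence
`1 → ⟨ζ_h⟩ →^ι E/K →^β G → 0` via the transversal `τ(x) = x + K`, i.e. the cocycle with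
`ι(μ_z(x,y)) = τ(x) + τ(y) - τ(x+y)` (`ι` being injective), satisfies
`μ_z(x,y) = Π_{i : z_i = 1} γ_{s_i}(x_i,y_i) = ζ_h^{Σ_{i : z_i = 1} ⌊(x_i+y_i)/s_i⌋}`;
(ii) `μ_z` is a coboundary in `Z²(G,⟨ζ_h⟩)` iff `s_i` is coprime to `h` whenever `z_i = 1`. -/
theorem muz_eq_prod_gamma_and_coboundary_iff
    (m h : ℕ) (s z : Fin m → ℕ)
    [∀ i, NeZero ((z i * (h - 1) + 1) * s i)]
    (hh : 2 ≤ h) (hs : ∀ i, 1 < s i) (hz : ∀ i, z i ≤ 1)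
    (i₀ : Fin m) (hi₀ : z i₀ = 1) :
    Function.Injective (iota m h s z hh hs hz i₀)
    ∧ (∀ x y : ∀ i, ZMod (s i),
        tau m h s z hh hs hz x + tau m h s z hh hs hz y - tau m h s z hh hs hz (x + y)
          = iota m h s z hh hs hz i₀
              (((∑ i, if z i = 1 then ((x i).val + (y i).val) / s i else 0 : ℕ)) : ZMod h))
    ∧ ((∃ f : (∀ i, ZMod (s i)) → ZMod h, f 0 = 0 ∧
          ∀ x y : ∀ i, ZMod (s i),
            (∏ i, zeta h ^ (if z i = 1 then ((x i).val + (y i).val) / s i else 0))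
              = zeta h ^ (f (x + y) - f x - f y).val)
        ↔ ∀ i, z i = 1 → Nat.Coprime (s i) h) := by
  have : NeZero h := ⟨by omega⟩
  refine ⟨iota_injective hh hs hz hi₀, tau_add_tau_sub_tau_eq_iota hh hs hz hi₀, ?_⟩
  simp only [Finset.prod_pow_eq_pow_sum, zeta_pow_eq_zeta_pow_iff (NeZero.ne h),
    ZMod.natCast_zmod_val]
  exact exists_coboundary_eq_sum_carry_iff hs _
end

section
/- With the setup of the previous equivalence of extensions (ψ = μ_z·∂φ, z ≠ 0, and Γ: E_ψ → E/K the isomorphism Γ(u,x) = ι(u·φ(x)⁻¹) + τ(x)), the image under Γ of the transversal {(1,x) : x ∈ G} ⊆ E_ψ equals {g + K ∈ E/K : φ'(g) ≡ 0 mod h}, where φ' is the expansion of φ of type z (here φ is viewed additively as a map G → ℤ_h via ζ_h^j ↔ j). -/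
open scoped BigOperators Pointwise

/-- The cocycle `μ_z` in exponent form:
`μ_z(x,y) = ζ_h^{Σ_{i : z i = 1} ⌊(x_i+y_i)/s_i⌋}`. -/
def muexp (m h : ℕ) (s z : Fin m → ℕ) (x y : ∀ i, ZMod (s i)) : ZMod h :=
  ((∑ i, if z i = 1 then ((x i).val + (y i).val) / s i else 0 : ℕ) : ZMod h)

/-- The cocycle `ψ = μ_z·∂φ` in exponent form. -/
def psiexp (m h : ℕ) (s z : Fin m → ℕ) (φ : (∀ i, ZMod (s i)) → ZMod h)
    (x y : ∀ i, ZMod (s i)) : ZMod h :=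
  muexp m h s z x y + (φ (x + y) - φ x - φ y)

/-- Multiplication of the central extension `E_ψ` determined by `ψ = μ_z·∂φ`:
the underlying set is `⟨ζ_h⟩ × G ≅ ℤ_h × G`, with
`(u,x)·(v,y) = (u·v·ψ(x,y), x+y)`. -/
def emul (m h : ℕ) (s z : Fin m → ℕ) (φ : (∀ i, ZMod (s i)) → ZMod h)
    (p q : ZMod h × (∀ i, ZMod (s i))) : ZMod h × (∀ i, ZMod (s i)) :=
  (p.1 + q.1 + psiexp m h s z φ p.2 q.2, p.2 + q.2)

/-- The map `Γ : E_ψ → E/K`, `Γ(u,x) = ι(u·φ(x)⁻¹) + τ(x)`. -/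
def Gamma (m h : ℕ) (s z : Fin m → ℕ)
    [∀ i, NeZero ((z i * (h - 1) + 1) * s i)]
    (hh : 2 ≤ h) (hs : ∀ i, 1 < s i) (hz : ∀ i, z i ≤ 1)
    (i₀ : Fin m) (φ : (∀ i, ZMod (s i)) → ZMod h)
    (p : ZMod h × (∀ i, ZMod (s i))) :
    (∀ i, ZMod ((z i * (h - 1) + 1) * s i)) ⧸ Ksub m h s z hh hs hz :=
  iota m h s z hh hs hz i₀ (p.1 - φ p.2) + tau m h s z hh hs hz p.2

/-!
`L` is exactly the kernel of reduction mod `s`, and on `L` the block-index sum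
`Σ_i ⌊g_i/s_i⌋ (mod h)` is additive, so `φ'(g + l) = φ'(g) + Σ_i l_i/s_i` for `l ∈ L`.
Hence two elements of `E` with the same reduction mod `s` and the same value of `φ'`
differ by an element of `K`. Since `Γ(1,x)` is the coset of `x + (−φ(x))·s_{i₀}e_{i₀}`,
which reduces to `x` and has `φ' = 0`, the cosets `Γ(1,x)` are exactly the cosets of
zeros of `φ'`.
-/

theorem NeZero.right_of_mul {a b : ℕ} [NeZero (a * b)] : NeZero b :=
  ⟨right_ne_zero_of_mul (NeZero.ne (a * b))⟩

theorem ZMod.val_add_div_eq_of_dvd {c s : ℕ} [NeZero (c * s)] (a b : ZMod (c * s))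
    (hb : s ∣ b.val) : (a + b).val / s = (a.val / s + b.val / s) % c := by
  have hs : 0 < s := (NeZero.right_of_mul (a := c)).pos
  obtain ⟨β, hβ⟩ := hb
  rw [ZMod.val_add, Nat.mod_mul_left_div_self, hβ, Nat.add_mul_div_left _ _ hs,
    Nat.mul_div_cancel_left _ hs]

section Expansion

variable {m h : ℕ} {s z : Fin m → ℕ} [∀ i, NeZero ((z i * (h - 1) + 1) * s i)]

def quotientSum (g : ∀ i, ZMod ((z i * (h - 1) + 1) * s i)) : ZMod h :=
  ((∑ i, (g i).val / s i : ℕ) : ZMod h)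

theorem expand_eq (φ : (∀ i, ZMod (s i)) → ZMod h)
    (g : ∀ i, ZMod ((z i * (h - 1) + 1) * s i)) :
    expand m h s z φ g = φ (resHom m h s z g) + quotientSum g :=
  rfl

theorem mem_LSet_iff_resHom_eq_zero (g : ∀ i, ZMod ((z i * (h - 1) + 1) * s i)) :
    g ∈ LSet m h s z ↔ resHom m h s z g = 0 := by
  simp only [LSet, Set.mem_ofPred_eq, funext_iff, Pi.zero_apply]
  refine forall_congr' fun i => ?_
  change _ ↔ ((g i).val : ZMod (s i)) = 0
  rw [ZMod.natCast_eq_zero_iff]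
  refine ⟨And.left, fun hdvd => ⟨hdvd, fun hzi => ?_⟩⟩
  -- for `z i = 0` the modulus is `s i` itself
  have hlt : (g i).val < s i := by simpa [hzi] using ZMod.val_lt (g i)
  exact Nat.eq_zero_of_dvd_of_lt hdvd hlt

theorem quotientSum_add_of_mem_LSet (hh : 1 ≤ h) (hz : ∀ i, z i ≤ 1)
    (g : ∀ i, ZMod ((z i * (h - 1) + 1) * s i)) {l : ∀ i, ZMod ((z i * (h - 1) + 1) * s i)}
    (hl : l ∈ LSet m h s z) : quotientSum (g + l) = quotientSum g + quotientSum l := by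
  simp only [quotientSum, ← Nat.cast_add, ← Finset.sum_add_distrib, Nat.cast_sum]
  refine Finset.sum_congr rfl fun i _ => ?_
  obtain ⟨hdvd, hzero⟩ := hl i
  rcases Nat.le_one_iff_eq_zero_or_eq_one.1 (hz i) with hzi | hzi
  · have hli : l i = 0 := (ZMod.val_eq_zero _).1 (hzero hzi)
    simp [hli]
  · have hdvd_c : h ∣ z i * (h - 1) + 1 := ⟨1, by rw [hzi]; omega⟩
    rw [Pi.add_apply, ZMod.val_add_div_eq_of_dvd _ _ hdvd, cast_val_mod hdvd_c]

theorem expand_add_of_mem_LSet (hh : 1 ≤ h) (hz : ∀ i, z i ≤ 1)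
    (φ : (∀ i, ZMod (s i)) → ZMod h) (g : ∀ i, ZMod ((z i * (h - 1) + 1) * s i))
    {l : ∀ i, ZMod ((z i * (h - 1) + 1) * s i)} (hl : l ∈ LSet m h s z) :
    expand m h s z φ (g + l) = expand m h s z φ g + quotientSum l := by
  rw [expand_eq, expand_eq, map_add, (mem_LSet_iff_resHom_eq_zero l).1 hl, add_zero,
    quotientSum_add_of_mem_LSet hh hz g hl, add_assoc]

theorem expand_add_nsmul_of_mem_LSet (hh : 1 ≤ h) (hz : ∀ i, z i ≤ 1)
    (φ : (∀ i, ZMod (s i)) → ZMod h) (g : ∀ i, ZMod ((z i * (h - 1) + 1) * s i))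
    {l : ∀ i, ZMod ((z i * (h - 1) + 1) * s i)} (hl : l ∈ LSet m h s z) (n : ℕ) :
    expand m h s z φ (g + n • l) = expand m h s z φ g + n * quotientSum l := by
  induction n with
  | zero => simp
  | succ n ih =>
    rw [succ_nsmul, ← add_assoc, expand_add_of_mem_LSet hh hz φ _ hl, ih]
    push_cast
    ring

theorem sub_mem_Ksub_of_expand_eq (hh : 2 ≤ h) (hs : ∀ i, 1 < s i) (hz : ∀ i, z i ≤ 1)
    (φ : (∀ i, ZMod (s i)) → ZMod h) {g g' : ∀ i, ZMod ((z i * (h - 1) + 1) * s i)}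
    (hres : resHom m h s z g = resHom m h s z g')
    (hexp : expand m h s z φ g = expand m h s z φ g') :
    g - g' ∈ Ksub m h s z hh hs hz := by
  have hL : g - g' ∈ LSet m h s z := by
    rw [mem_LSet_iff_resHom_eq_zero, map_sub, hres, sub_self]
  have hsum : quotientSum (g - g') = 0 := by
    rw [← sub_add_cancel g g', add_comm, expand_add_of_mem_LSet (by omega) hz φ g' hL] at hexp
    simpa using hexp
  exact ⟨hL, (ZMod.natCast_eq_zero_iff _ _).1 hsum⟩

def tauRep (x : ∀ i, ZMod (s i)) : ∀ i, ZMod ((z i * (h - 1) + 1) * s i) :=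
  fun i => ((x i).val : ZMod ((z i * (h - 1) + 1) * s i))

theorem val_tauRep (x : ∀ i, ZMod (s i)) (i : Fin m) :
    (tauRep (h := h) (z := z) x i).val = (x i).val := by
  have := NeZero.right_of_mul (a := z i * (h - 1) + 1) (b := s i)
  exact ZMod.val_cast_of_lt ((ZMod.val_lt (x i)).trans_le (Nat.le_mul_of_pos_left _ (by omega)))

theorem resHom_tauRep (x : ∀ i, ZMod (s i)) : resHom m h s z (tauRep x) = x := by
  funext i
  have := NeZero.right_of_mul (a := z i * (h - 1) + 1) (b := s i)
  change ((tauRep (h := h) (z := z) x i).val : ZMod (s i)) = x i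
  rw [val_tauRep, ZMod.natCast_zmod_val]

theorem quotientSum_tauRep (x : ∀ i, ZMod (s i)) :
    quotientSum (h := h) (z := z) (tauRep x) = 0 := by
  refine (congrArg Nat.cast (Finset.sum_eq_zero fun i _ => ?_)).trans Nat.cast_zero
  have := NeZero.right_of_mul (a := z i * (h - 1) + 1) (b := s i)
  rw [val_tauRep, Nat.div_eq_of_lt (ZMod.val_lt _)]

/-- The representative `s_{i₀}e_{i₀}` of the coset `ι(ζ_h)`. -/
def iotaRep (i₀ : Fin m) : ∀ i, ZMod ((z i * (h - 1) + 1) * s i) :=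
  Pi.single i₀ (s i₀ : ZMod ((z i₀ * (h - 1) + 1) * s i₀))

theorem iotaRep_mem_LSet (i₀ : Fin m) :
    iotaRep (h := h) (s := s) (z := z) i₀ ∈ LSet m h s z := by
  rw [mem_LSet_iff_resHom_eq_zero]
  funext i
  change ((iotaRep (h := h) (s := s) (z := z) i₀ i).val : ZMod (s i)) = 0
  rcases eq_or_ne i i₀ with rfl | hi
  · simp [iotaRep, ZMod.val_natCast, cast_val_mod (dvd_mul_left _ _)]
  · simp [iotaRep, hi]

theorem quotientSum_iotaRep (hh : 2 ≤ h) {i₀ : Fin m} (hi₀ : z i₀ = 1) :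
    quotientSum (iotaRep (h := h) (s := s) (z := z) i₀) = 1 := by
  have hs : 0 < s i₀ := (NeZero.right_of_mul (a := z i₀ * (h - 1) + 1)).pos
  have hval : (iotaRep (h := h) (s := s) (z := z) i₀ i₀).val = s i₀ := by
    rw [iotaRep, Pi.single_eq_same]
    refine ZMod.val_cast_of_lt ?_
    rw [hi₀, one_mul, Nat.sub_add_cancel (by omega)]
    exact lt_mul_left hs (by omega)
  rw [quotientSum, Finset.sum_eq_single i₀ (fun i _ hi => by simp [iotaRep, hi]) (by simp),
    hval, Nat.div_self hs, Nat.cast_one]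

theorem Gamma_zero_eq_mk (hh : 2 ≤ h) (hs : ∀ i, 1 < s i) (hz : ∀ i, z i ≤ 1) (i₀ : Fin m)
    (φ : (∀ i, ZMod (s i)) → ZMod h) (x : ∀ i, ZMod (s i)) :
    Gamma m h s z hh hs hz i₀ φ (0, x) =
      QuotientAddGroup.mk (tauRep x + (-φ x).val • iotaRep i₀) := by
  rw [Gamma, iota, tau, zero_sub, ← QuotientAddGroup.mk_nsmul, ← QuotientAddGroup.mk_add,
    add_comm]
  rfl

theorem resHom_Gamma_rep (i₀ : Fin m) (j : ℕ) (x : ∀ i, ZMod (s i)) :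
    resHom m h s z (tauRep x + j • iotaRep i₀) = x := by
  rw [map_add, map_nsmul, (mem_LSet_iff_resHom_eq_zero _).1 (iotaRep_mem_LSet i₀), smul_zero,
    add_zero, resHom_tauRep]

theorem expand_Gamma_rep (hh : 2 ≤ h) (hz : ∀ i, z i ≤ 1) {i₀ : Fin m} (hi₀ : z i₀ = 1)
    (φ : (∀ i, ZMod (s i)) → ZMod h) (x : ∀ i, ZMod (s i)) :
    expand m h s z φ (tauRep x + (-φ x).val • iotaRep i₀) = 0 := by
  have : NeZero h := ⟨by omega⟩
  rw [expand_add_nsmul_of_mem_LSet (by omega) hz φ _ (iotaRep_mem_LSet i₀), expand_eq,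
    resHom_tauRep, quotientSum_tauRep, quotientSum_iotaRep hh hi₀, ZMod.natCast_zmod_val]
  ring

end Expansion

theorem Gamma_image_transversal_general
    (m h : ℕ) (s z : Fin m → ℕ)
    [∀ i, NeZero ((z i * (h - 1) + 1) * s i)]
    (hh : 2 ≤ h) (hs : ∀ i, 1 < s i) (hz : ∀ i, z i ≤ 1)
    (i₀ : Fin m) (hi₀ : z i₀ = 1)
    (φ : (∀ i, ZMod (s i)) → ZMod h) :
    Gamma m h s z hh hs hz i₀ φ ''
        (Set.range fun x : ∀ i, ZMod (s i) => ((0 : ZMod h), x))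
      = QuotientAddGroup.mk (s := Ksub m h s z hh hs hz) ''
          {g | expand m h s z φ g = 0} := by
  ext Q
  constructor
  · rintro ⟨_, ⟨x, rfl⟩, rfl⟩
    exact ⟨_, expand_Gamma_rep hh hz hi₀ φ x, (Gamma_zero_eq_mk hh hs hz i₀ φ x).symm⟩
  · rintro ⟨g, hg, rfl⟩
    set x := resHom m h s z g
    refine ⟨(0, x), ⟨x, rfl⟩, ?_⟩
    rw [Gamma_zero_eq_mk, QuotientAddGroup.eq, ← sub_eq_neg_add]
    exact sub_mem_Ksub_of_expand_eq hh hs hz φ (resHom_Gamma_rep i₀ _ x).symm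
      (hg.trans (expand_Gamma_rep hh hz hi₀ φ x).symm)

/-- the image under `Γ` of the transversal `{(1,x) : x ∈ G} ⊆ E_ψ`
equals `{g + K ∈ E/K : φ'(g) ≡ 0 (mod h)}`, where `φ'` is the expansion of `φ`
of type `z`. -/
theorem Gamma_image_transversal
    (m h : ℕ) (s z : Fin m → ℕ)
    [∀ i, NeZero ((z i * (h - 1) + 1) * s i)]
    (hh : 2 ≤ h) (hs : ∀ i, 1 < s i) (hz : ∀ i, z i ≤ 1)
    (i₀ : Fin m) (hi₀ : z i₀ = 1)
    (φ : (∀ i, ZMod (s i)) → ZMod h) (hφ0 : φ 0 = 0) :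
    Gamma m h s z hh hs hz i₀ φ ''
        (Set.range fun x : ∀ i, ZMod (s i) => ((0 : ZMod h), x))
      = QuotientAddGroup.mk (s := Ksub m h s z hh hs hz) ''
          {g | expand m h s z φ g = 0} :=
  Gamma_image_transversal_general m h s z hh hs hz i₀ hi₀ φ
end

section
/- Let φ: G → ℤ_h be an h-ary (s_1,…,s_m)-array with expansion φ': E → ℤ_h of type z, and let N_{φ'}^i = {g ∈ E : φ'(g) ≡ i mod h}. Then for all 0 ≤ i, j ≤ h−1 and all e ∈ E, |N_{φ'}^i ∩ (e + N_{φ'}^i)| = |N_{φ'}^j ∩ (e + N_{φ'}^j)|. -/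
open scoped BigOperators Pointwise

noncomputable section

/-- `N_{φ'}^i = {g ∈ E : φ'(g) ≡ i (mod h)}`. -/
def NSet (m h : ℕ) (s z : Fin m → ℕ) (φ : (∀ i, ZMod (s i)) → ZMod h) (i : ZMod h) :
    Set (∀ i, ZMod ((z i * (h - 1) + 1) * s i)) :=
  {g | expand m h s z φ g = i}

/-- Adding `s` in `ZMod n` with `n = h*s` preserves the residue mod `s` and bumps
the floor `⌊·/s⌋` by `1` modulo `h`. -/
lemma zmod_add_s (h s n : ℕ) (hh : 2 ≤ h) (hs : 0 < s) (hn : n = h * s) (g : ZMod n) :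
    (g + (s : ZMod n)).val % s = g.val % s ∧
    (((g + (s : ZMod n)).val / s : ℕ) : ZMod h) = ((g.val / s : ℕ) : ZMod h) + 1 := by
  subst hn
  have hpos : 0 < h * s := Nat.mul_pos (by omega) hs
  haveI : NeZero (h * s) := ⟨hpos.ne'⟩
  have hsv : (s : ZMod (h * s)).val = s := by
    rw [ZMod.val_natCast, Nat.mod_eq_of_lt]
    calc s = 1 * s := (one_mul s).symm
    _ < h * s := (Nat.mul_lt_mul_right hs).mpr (by omega)
  have hv : g.val < h * s := ZMod.val_lt g
  have hval : (g + (s : ZMod (h * s))).val = (g.val + s) % (h * s) := by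
    rw [ZMod.val_add, hsv]
  constructor
  · rw [hval, Nat.mod_mod_of_dvd _ ⟨h, by ring⟩, Nat.add_mod_right]
  · rw [hval]
    by_cases hc : g.val + s < h * s
    · rw [Nat.mod_eq_of_lt hc, Nat.add_div_right _ hs]
      push_cast; ring
    · push_neg at hc
      set w := g.val + s - h * s with hw
      have hws : w < s := by omega
      have hmod : (g.val + s) % (h * s) = w := by
        have : g.val + s = w + (h * s) * 1 := by omega
        rw [this, Nat.add_mul_mod_self_left]
        have hsle : s ≤ h * s := Nat.le_mul_of_pos_left s (by omega)
        exact Nat.mod_eq_of_lt (by omega)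
      have hgv : g.val = w + (h - 1) * s := by
        have : (h - 1) * s + s = h * s := by
          have : (h - 1) + 1 = h := by omega
          calc (h - 1) * s + s = ((h - 1) + 1) * s := by ring
          _ = h * s := by rw [this]
        omega
      have hdiv1 : (g.val + s) % (h * s) / s = 0 := by
        rw [hmod]; exact Nat.div_eq_of_lt hws
      have hdiv2 : g.val / s = h - 1 := by
        rw [hgv, Nat.add_mul_div_right _ _ hs, Nat.div_eq_of_lt hws, Nat.zero_add]
      rw [hdiv1, hdiv2]
      have : ((h - 1 : ℕ) : ZMod h) + 1 = ((h - 1 + 1 : ℕ) : ZMod h) := by push_cast; ring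
      rw [this]
      have : h - 1 + 1 = h := by omega
      rw [this, ZMod.natCast_self, Nat.cast_zero]

section Main

variable (m h : ℕ) (s z : Fin m → ℕ)

/-- The translation vector: `s i₀` in the `i₀` coordinate, `0` elsewhere. -/
def tvec (i₀ : Fin m) : ∀ i, ZMod ((z i * (h - 1) + 1) * s i) :=
  Pi.single i₀ ((s i₀ : ℕ) : ZMod ((z i₀ * (h - 1) + 1) * s i₀))

lemma expand_add_tvec (hh : 2 ≤ h) (hs : ∀ i, 1 < s i)
    (φ : (∀ i, ZMod (s i)) → ZMod h) (i₀ : Fin m) (hi₀ : z i₀ = 1)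
    (g : ∀ i, ZMod ((z i * (h - 1) + 1) * s i)) :
    expand m h s z φ (g + tvec m h s z i₀) = expand m h s z φ g + 1 := by
  have hn : (z i₀ * (h - 1) + 1) * s i₀ = h * s i₀ := by
    rw [hi₀, one_mul]
    congr 1
    omega
  have key := zmod_add_s h (s i₀) _ hh (by have := hs i₀; omega) hn (g i₀)
  have hcomp : ∀ i, (g + tvec m h s z i₀) i =
      if hi : i = i₀ then hi ▸ (g i₀ + ((s i₀ : ℕ) : ZMod ((z i₀ * (h - 1) + 1) * s i₀)))
      else g i := by
    intro i
    by_cases hi : i = i₀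
    · subst hi; simp [tvec, Pi.single_eq_same]
    · simp [hi, tvec, Pi.single_eq_of_ne hi]
  unfold expand
  have hφ : (fun i => (((g + tvec m h s z i₀) i).val : ZMod (s i)))
      = fun i => (((g i).val : ℕ) : ZMod (s i)) := by
    funext i
    by_cases hi : i = i₀
    · subst hi
      rw [hcomp i, dif_pos rfl]
      have h1 : ((g i + ((s i : ℕ) : ZMod ((z i * (h - 1) + 1) * s i))).val : ZMod (s i))
          = (((g i + ((s i : ℕ) : ZMod ((z i * (h - 1) + 1) * s i))).val % s i : ℕ) : ZMod (s i)) :=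
        (ZMod.natCast_mod _ _).symm
      rw [h1, key.1, ZMod.natCast_mod]
    · rw [hcomp i, dif_neg hi]
  rw [hφ]
  have hsum : ((∑ i, ((g + tvec m h s z i₀) i).val / s i : ℕ) : ZMod h)
      = ((∑ i, (g i).val / s i : ℕ) : ZMod h) + 1 := by
    rw [Nat.cast_sum, Nat.cast_sum]
    have hsplit : ∀ (f : Fin m → ZMod h), ∑ i, f i = f i₀ + ∑ i ∈ Finset.univ.erase i₀, f i := by
      intro f
      rw [Finset.add_sum_erase _ f (Finset.mem_univ i₀)]
    rw [hsplit, hsplit (fun i => ((g i).val / s i : ℕ))]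
    have h1 : (((g + tvec m h s z i₀) i₀).val / s i₀ : ZMod h)
        = ((g i₀).val / s i₀ : ℕ) + 1 := by
      have := hcomp i₀
      rw [dif_pos rfl] at this
      rw [this]
      exact key.2
    rw [h1]
    have h2 : ∑ i ∈ Finset.univ.erase i₀, (((g + tvec m h s z i₀) i).val / s i : ZMod h)
        = ∑ i ∈ Finset.univ.erase i₀, (((g i).val / s i : ℕ) : ZMod h) := by
      apply Finset.sum_congr rfl
      intro i hi
      have hne : i ≠ i₀ := Finset.ne_of_mem_erase hi
      rw [hcomp i, dif_neg hne]
    rw [h2]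
    ring
  rw [hsum]
  ring

lemma expand_add_nsmul_tvec (hh : 2 ≤ h) (hs : ∀ i, 1 < s i)
    (φ : (∀ i, ZMod (s i)) → ZMod h) (i₀ : Fin m) (hi₀ : z i₀ = 1)
    (g : ∀ i, ZMod ((z i * (h - 1) + 1) * s i)) (n : ℕ) :
    expand m h s z φ (g + n • tvec m h s z i₀) = expand m h s z φ g + n := by
  induction n with
  | zero => simp
  | succ k ih =>
      have : g + (k + 1) • tvec m h s z i₀ = (g + k • tvec m h s z i₀) + tvec m h s z i₀ := by
        rw [succ_nsmul]; abel
      rw [this, expand_add_tvec m h s z hh hs φ i₀ hi₀, ih]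
      push_cast
      ring

/-- `|N_{φ'}^i ∩ (e + N_{φ'}^i)| = |N_{φ'}^j ∩ (e + N_{φ'}^j)|`
for all `i, j` and all `e ∈ E`. -/
theorem card_NSet_inter_translate
    (m h : ℕ) (hh : 2 ≤ h) (s z : Fin m → ℕ) (hs : ∀ i, 1 < s i) (hz : ∀ i, z i ≤ 1)
    (hz0 : ∃ i, z i = 1)
    (φ : (∀ i, ZMod (s i)) → ZMod h) (i j : ZMod h)
    (e : ∀ i, ZMod ((z i * (h - 1) + 1) * s i)) :
    Nat.card ↥(NSet m h s z φ i ∩ ((e + ·) '' NSet m h s z φ i))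
      = Nat.card ↥(NSet m h s z φ j ∩ ((e + ·) '' NSet m h s z φ j)) := by
  obtain ⟨i₀, hi₀⟩ := hz0
  haveI : NeZero h := ⟨by omega⟩
  set c : ZMod h := j - i with hc
  set w := (c.val) • tvec m h s z i₀ with hw
  have hexp : ∀ g, expand m h s z φ (g + w) = expand m h s z φ g + c := by
    intro g
    rw [hw, expand_add_nsmul_tvec m h s z hh hs φ i₀ hi₀ g c.val,
      ZMod.natCast_val, ZMod.cast_id]
  have hinj : Function.Injective (fun g => w + g :
      (∀ i, ZMod ((z i * (h - 1) + 1) * s i)) → (∀ i, ZMod ((z i * (h - 1) + 1) * s i))) :=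
    fun a b hab => by simpa using hab
  have himg : (fun g => w + g) '' NSet m h s z φ i = NSet m h s z φ j := by
    ext g
    constructor
    · rintro ⟨x, hx, rfl⟩
      simp only [NSet, Set.mem_setOf_eq] at hx ⊢
      rw [add_comm w x, hexp x, hx, hc]
      ring
    · intro hg
      refine ⟨g - w, ?_, by show w + (g - w) = g; rw [add_comm, sub_add_cancel]⟩
      simp only [NSet, Set.mem_setOf_eq] at hg ⊢
      have := hexp (g - w)
      rw [sub_add_cancel, hg] at this
      have hres : expand m h s z φ (g - w) = j - c := by
        rw [eq_sub_iff_add_eq, ← this]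
      rw [hres, hc]
      ring
  have hcomm : (fun g => w + g) '' ((e + ·) '' NSet m h s z φ i)
      = (e + ·) '' ((fun g => w + g) '' NSet m h s z φ i) := by
    rw [Set.image_image, Set.image_image]
    apply Set.image_congr'
    intro x
    simp [add_left_comm]
  calc Nat.card ↥(NSet m h s z φ i ∩ ((e + ·) '' NSet m h s z φ i))
      = Nat.card ↥((fun g => w + g) '' (NSet m h s z φ i ∩ ((e + ·) '' NSet m h s z φ i))) :=
        (Nat.card_image_of_injective hinj _).symm
    _ = Nat.card ↥(NSet m h s z φ j ∩ ((e + ·) '' NSet m h s z φ j)) := by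
        rw [Set.image_inter hinj, himg, hcomm, himg]

end Main

end
end

section
/- Let H be a finite group whose order is divisible by a prime h. Then a cocycle ψ ∈ Z²(H, ⟨ζ_h⟩) is orthogonal (i.e., M_ψ ∈ BH(|H|, h)) if and only if {(1, x) : x ∈ H} is a (|H|, h, |H|, |H|/h)-relative difference set in E_ψ with forbidden subgroup ⟨(ζ_h, 1)⟩. -/
/-! By the cocycle identity, the inner product of rows `a` and `b` of `M_ψ` is a root of unity
times the row sum `∑_c ζ^{ψ(ab⁻¹, c)}`, so `ψ` is orthogonal iff every row `g ≠ 1` sums to `0`.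
The minimal polynomial of `ζ_h` over `ℚ` is `1 + X + ⋯ + X^{h-1}`, so a vanishing sum
`∑_u a_u ζ^u` with rational coefficients has all `a_u` equal: a row sums to `0` iff every exponent
`u` occurs `|H|/h` times in it. On the other side, `(0, gy)(0, y)⁻¹ = (-ψ(g, y), g)` in `E_ψ`, so the
number of representations of `(-u, g)` as a quotient of elements of `{(0, x)}` is exactly the number
of occurrences of `u` in row `g`, while `(1, 1)` generates the kernel of `E_ψ → H`. -/

open scoped BigOperators

noncomputable section

/-- A normalized cocycle `ψ : H × H → ⟨ζ_h⟩ ≅ ℤ_h` written in exponent (additive)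
form: multiplicatively, `ψ(a,b)ψ(ab,c) = ψ(a,bc)ψ(b,c)` and `ψ(1,1) = 1`. -/
structure Cocyc (H : Type*) [Group H] (h : ℕ) where
  f : H → H → ZMod h
  coc : ∀ a b c, f a b + f (a * b) c = f a (b * c) + f b c
  norm : f 1 1 = 0

namespace Cocyc

variable {H : Type*} [Group H] {h : ℕ} (ψ : Cocyc H h)

theorem f_one_left (g : H) : ψ.f 1 g = 0 := by
  have h1 := ψ.coc 1 1 g
  rw [one_mul, one_mul, ψ.norm, zero_add] at h1
  exact left_eq_add.mp h1

theorem f_one_right (g : H) : ψ.f g 1 = 0 := by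
  have h1 := ψ.coc g 1 1
  rw [mul_one, mul_one, ψ.norm, add_zero] at h1
  exact add_eq_right.mp h1

theorem f_inv (g : H) : ψ.f g⁻¹ g = ψ.f g g⁻¹ := by
  have h1 := ψ.coc g g⁻¹ g
  rw [mul_inv_cancel, inv_mul_cancel, ψ.f_one_left, ψ.f_one_right, add_zero, zero_add] at h1
  exact h1.symm

/-- The central extension `E_ψ` of `⟨ζ_h⟩` by `H` determined by the cocycle `ψ`:
the underlying set is `⟨ζ_h⟩ × H ≅ ℤ_h × H`, with multiplication
`(u,g)(v,g') = (u·v·ψ(g,g'), g·g')`. -/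
@[ext]
structure Ext (ψ : Cocyc H h) where
  u : ZMod h
  x : H

variable {ψ}

instance : Mul (Ext ψ) := ⟨fun p q => ⟨p.u + q.u + ψ.f p.x q.x, p.x * q.x⟩⟩

@[simp] theorem mul_u (p q : Ext ψ) : (p * q).u = p.u + q.u + ψ.f p.x q.x := rfl
@[simp] theorem mul_x (p q : Ext ψ) : (p * q).x = p.x * q.x := rfl

instance : One (Ext ψ) := ⟨⟨0, 1⟩⟩

@[simp] theorem one_u : (1 : Ext ψ).u = 0 := rfl
@[simp] theorem one_x : (1 : Ext ψ).x = 1 := rfl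

instance : Inv (Ext ψ) := ⟨fun p => ⟨-p.u - ψ.f p.x p.x⁻¹, p.x⁻¹⟩⟩

@[simp] theorem inv_u (p : Ext ψ) : (p⁻¹).u = -p.u - ψ.f p.x p.x⁻¹ := rfl
@[simp] theorem inv_x (p : Ext ψ) : (p⁻¹).x = p.x⁻¹ := rfl

instance : Group (Ext ψ) where
  mul_assoc p q r := by
    ext
    · show p.u + q.u + ψ.f p.x q.x + r.u + ψ.f (p.x * q.x) r.x
        = p.u + (q.u + r.u + ψ.f q.x r.x) + ψ.f p.x (q.x * r.x)
      linear_combination ψ.coc p.x q.x r.x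
    · simp [mul_assoc]
  one_mul p := by
    ext
    · simp [ψ.f_one_left]
    · simp
  mul_one p := by
    ext
    · simp [ψ.f_one_right]
    · simp
  inv_mul_cancel p := by
    ext
    · show -p.u - ψ.f p.x p.x⁻¹ + p.u + ψ.f p.x⁻¹ p.x = 0
      rw [ψ.f_inv]
      ring
    · simp

end Cocyc

/-- `R` is a `(v,n,k,λ)`-relative difference set in the group `E` relative
to the (forbidden) subgroup `N`: a `k`-subset of a transversal for `N` such that
every `x ∈ E ∖ N` has exactly `λ` representations `x = r·r'⁻¹` with `r, r' ∈ R`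
(and no nonidentity element of `N` has such a representation). -/
def IsRDS {E : Type*} [Group E] (N : Subgroup E) (R : Set E) (v n k l : ℕ) : Prop :=
  N.index = v ∧ Nat.card N = n ∧ Nat.card R = k ∧
    (∀ r ∈ R, ∀ r' ∈ R, r * r'⁻¹ ∈ N → r = r') ∧
    ∀ x : E, x ∉ N → Nat.card {p : R × R // (p.1 : E) * (p.2 : E)⁻¹ = x} = l

open Polynomial in
theorem IsPrimitiveRoot.eq_of_sum_mul_pow_val_eq_zero {K : Type*} [Field K] [CharZero K]
    {p : ℕ} [hp : Fact p.Prime] {μ : K} (hμ : IsPrimitiveRoot μ p) (a : ZMod p → ℚ)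
    (h : ∑ u, (a u : K) * μ ^ u.val = 0) (u v : ZMod p) : a u = a v := by
  set P : ℚ[X] := ∑ u, C (a u) * X ^ u.val
  have hcoeff (u : ZMod p) : P.coeff u.val = a u := by
    simp [P, finsetSum_coeff, coeff_X_pow, (ZMod.val_injective p).eq_iff]
  obtain ⟨Q, hPQ⟩ : cyclotomic p ℚ ∣ P := by
    rw [cyclotomic_eq_minpoly_rat hμ hp.out.pos]
    exact minpoly.dvd ℚ μ (by simpa [P] using h)
  have hQ : Q.natDegree = 0 := by
    rcases eq_or_ne Q 0 with rfl | hQ0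
    · simp
    have hle : P.natDegree ≤ p - 1 := natDegree_sum_le_of_forall_le _ _ fun u _ =>
      (natDegree_C_mul_X_pow_le _ _).trans (Nat.le_sub_one_of_lt u.val_lt)
    rw [hPQ, natDegree_mul (cyclotomic_ne_zero p ℚ) hQ0, natDegree_cyclotomic,
      Nat.totient_prime hp.out] at hle
    omega
  have hconst (u : ZMod p) : a u = Q.coeff 0 := by
    rw [← hcoeff, hPQ, eq_C_of_natDegree_eq_zero hQ, coeff_mul_C, cyclotomic_prime]
    simp [finsetSum_coeff, coeff_X_pow, u.val_lt]
  rw [hconst, hconst]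

theorem zeta_pow_val {N : ℕ} [NeZero N] (u : ZMod N) : zeta N ^ u.val = ZMod.stdAddChar u := by
  rw [ZMod.stdAddChar_apply, ZMod.toCircle_apply, zeta, ← Complex.exp_nat_mul]
  ring_nf

theorem isPrimitiveRoot_zeta {N : ℕ} [NeZero N] : IsPrimitiveRoot (zeta N) N :=
  Complex.isPrimitiveRoot_exp N (NeZero.ne N)

open Finset in
theorem ZMod.sum_stdAddChar_eq_zero_iff {p : ℕ} [hp : Fact p.Prime] {ι : Type*} [Fintype ι]
    (f : ι → ZMod p) :
    ∑ i, stdAddChar (f i) = 0 ↔ ∀ u, #{i | f i = u} = Fintype.card ι / p := by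
  have hfiber : ∑ i, stdAddChar (f i) = ∑ u, (#{i | f i = u} : ℂ) * stdAddChar u := by
    rw [← sum_fiberwise univ f]
    refine sum_congr rfl fun u _ => ?_
    rw [sum_congr rfl fun i hi => by rw [(mem_filter.1 hi).2], sum_const, nsmul_eq_mul]
  have hcard : ∑ u, #{i | f i = u} = Fintype.card ι :=
    (card_eq_sum_card_fiberwise (by simp)).symm
  rw [hfiber]
  constructor
  · intro h u
    have hconst (v : ZMod p) : #{i | f i = v} = #{i | f i = u} := by
      exact_mod_cast isPrimitiveRoot_zeta.eq_of_sum_mul_pow_val_eq_zero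
        (fun u => (#{i | f i = u} : ℚ)) (by simpa [zeta_pow_val] using h) v u
    rw [← hcard, sum_congr rfl fun v _ => hconst v, sum_const, card_univ, ZMod.card, smul_eq_mul,
      Nat.mul_div_cancel_left _ hp.out.pos]
  · intro h
    simp_rw [h, ← mul_sum]
    rw [AddChar.sum_eq_zero_of_ne_one, mul_zero]
    simpa using ZMod.isPrimitive_stdAddChar p one_ne_zero

namespace Cocyc

variable {H : Type*} [Group H] {h : ℕ} (ψ : Cocyc H h)

theorem f_mul_left_sub (g b c : H) : ψ.f (g * b) c - ψ.f b c = ψ.f g (b * c) - ψ.f g b := by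
  linear_combination ψ.coc g b c

open ZMod Finset in
theorem sum_stdAddChar_f_mul_left_sub [NeZero h] [Fintype H] (g b : H) :
    ∑ c, stdAddChar (ψ.f (g * b) c - ψ.f b c) =
      stdAddChar (-ψ.f g b) * ∑ c, stdAddChar (ψ.f g c) := by
  simp_rw [f_mul_left_sub, sub_eq_neg_add, AddChar.map_add_eq_mul, ← mul_sum]
  exact congrArg _ (Fintype.sum_equiv (Equiv.mulLeft b) _ _ fun _ => rfl)

open ZMod Matrix in
theorem isBH_iff [NeZero h] [Fintype H] [DecidableEq H] :
    IsBH (Fintype.card H) h (Matrix.of fun a b : H => zeta h ^ (ψ.f a b).val) ↔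
      ∀ g ≠ 1, ∑ c, stdAddChar (ψ.f g c) = 0 := by
  set M := Matrix.of fun a b : H => zeta h ^ (ψ.f a b).val
  have hgram (a b : H) : (M * Mᴴ) a b =
      stdAddChar (-ψ.f (a * b⁻¹) b) * ∑ c, stdAddChar (ψ.f (a * b⁻¹) c) := by
    rw [← sum_stdAddChar_f_mul_left_sub, inv_mul_cancel_right, Matrix.mul_apply]
    simp [M, zeta_pow_val, ← AddChar.map_neg_eq_conj, ← AddChar.map_add_eq_mul, sub_eq_add_neg]
  have hdiag (a : H) : (M * Mᴴ) a a = Fintype.card H := by simp [hgram, f_one_left]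
  refine ⟨fun ⟨_, _, hM⟩ g hg => ?_, fun hS => ⟨rfl, fun a b => ⟨_, rfl⟩, ?_⟩⟩
  · simpa [hgram, f_one_right, hg] using congrFun₂ hM g 1
  · ext a b
    rcases eq_or_ne a b with rfl | hab
    · simp [hdiag]
    · rw [hgram, hS _ (mul_inv_eq_one.not.mpr hab)]
      simp [hab]

end Cocyc

theorem Set.card_mul_inv_eq_card_mul_mem {E : Type*} [Group E] (R : Set E) (e : E) :
    Nat.card {p : R × R // (p.1 : E) * (p.2 : E)⁻¹ = e} = Nat.card {r : R // e * r ∈ R} :=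
  Nat.card_congr
    { toFun p := ⟨p.1.2, by simp [← p.2]⟩
      invFun r := ⟨(⟨e * r, r.2⟩, r.1), mul_inv_cancel_right _ _⟩
      left_inv := fun ⟨⟨r, r'⟩, hp⟩ => by subst hp; simp
      right_inv _ := rfl }

namespace Cocyc.Ext

variable {H : Type*} [Group H] {h : ℕ} {ψ : Cocyc H h}

def proj : Ext ψ →* H where
  toFun := Ext.x
  map_one' := rfl
  map_mul' _ _ := rfl

def ofZMod : Multiplicative (ZMod h) →* Ext ψ where
  toFun u := ⟨u.toAdd, 1⟩
  map_one' := rfl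
  map_mul' u v := by ext <;> simp [ψ.norm]

theorem ofZMod_injective : Function.Injective (ofZMod (ψ := ψ)) :=
  fun _ _ huv => congrArg Ext.u huv

theorem card_zpowers_mk_one_one : Nat.card (Subgroup.zpowers (⟨1, 1⟩ : Ext ψ)) = h := by
  rw [Nat.card_zpowers, show (⟨1, 1⟩ : Ext ψ) = ofZMod (.ofAdd 1) from rfl,
    orderOf_injective _ ofZMod_injective, orderOf_ofAdd_eq_addOrderOf, ZMod.addOrderOf_one]

theorem zpowers_mk_one_one_eq_ker : Subgroup.zpowers (⟨1, 1⟩ : Ext ψ) = proj.ker := by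
  refine le_antisymm (Subgroup.zpowers_le.2 rfl) fun e he => ⟨(e.u.cast : ℤ), ?_⟩
  change _ ^ _ = e
  rw [show (⟨1, 1⟩ : Ext ψ) = ofZMod (.ofAdd 1) from rfl, ← map_zpow, ← ofAdd_zsmul, zsmul_one,
    ZMod.intCast_zmod_cast]
  exact Ext.ext rfl he.symm

theorem index_zpowers_mk_one_one : (Subgroup.zpowers (⟨1, 1⟩ : Ext ψ)).index = Nat.card H := by
  rw [zpowers_mk_one_one_eq_ker, Subgroup.index_ker,
    MonoidHom.range_eq_top_of_surjective _ fun g => ⟨⟨0, g⟩, rfl⟩, Subgroup.card_top]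

theorem mk_zero_injective : Function.Injective fun x : H => (⟨0, x⟩ : Ext ψ) :=
  fun _ _ hxy => congrArg Ext.x hxy

theorem mem_range_mk_zero_iff {e : Ext ψ} :
    e ∈ Set.range (fun x : H => (⟨0, x⟩ : Ext ψ)) ↔ e.u = 0 :=
  ⟨fun ⟨_, hx⟩ => hx ▸ rfl, fun hu => ⟨e.x, Ext.ext hu.symm rfl⟩⟩

open Finset in
theorem card_range_mk_zero_mul_inv_eq [Fintype H] (e : Ext ψ) :
    Nat.card {p : (Set.range fun x : H => (⟨0, x⟩ : Ext ψ)) ×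
        (Set.range fun x : H => (⟨0, x⟩ : Ext ψ)) // (p.1 : Ext ψ) * (p.2 : Ext ψ)⁻¹ = e} =
      #{y | ψ.f e.x y = -e.u} := by
  rw [← Fintype.card_subtype, ← Nat.card_eq_fintype_card, Set.card_mul_inv_eq_card_mul_mem]
  refine (Nat.card_congr ((Equiv.ofInjective _ mk_zero_injective).subtypeEquiv fun y => ?_)).symm
  rw [Equiv.ofInjective_apply, mem_range_mk_zero_iff, mul_u, add_zero, eq_neg_iff_add_eq_zero,
    add_comm]

open Finset in
theorem isRDS_iff [Fintype H] :
    IsRDS (Subgroup.zpowers (⟨1, 1⟩ : Ext ψ)) (Set.range fun x : H => (⟨0, x⟩ : Ext ψ))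
        (Fintype.card H) h (Fintype.card H) (Fintype.card H / h) ↔
      ∀ g ≠ 1, ∀ u, #{c | ψ.f g c = u} = Fintype.card H / h := by
  have hmem {e : Ext ψ} : e ∈ Subgroup.zpowers ⟨1, 1⟩ ↔ e.x = 1 := by
    rw [zpowers_mk_one_one_eq_ker]; rfl
  refine ⟨fun ⟨_, _, _, _, hR⟩ g hg u => ?_, fun hS => ⟨?_, card_zpowers_mk_one_one, ?_, ?_,
    fun e he => (card_range_mk_zero_mul_inv_eq e).trans (hS _ (hmem.not.1 he) _)⟩⟩
  · simpa [card_range_mk_zero_mul_inv_eq] using hR ⟨-u, g⟩ (hmem.not.2 hg)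
  · rw [index_zpowers_mk_one_one, Nat.card_eq_fintype_card]
  · rw [Nat.card_range_of_injective mk_zero_injective, Nat.card_eq_fintype_card]
  · rintro _ ⟨x, rfl⟩ _ ⟨y, rfl⟩ hxy
    rw [hmem, mul_x, inv_x, mul_inv_eq_one] at hxy
    exact congrArg (fun x : H => (⟨0, x⟩ : Ext ψ)) hxy

end Cocyc.Ext

theorem orthogonal_iff_RDS_general
    {H : Type*} [Group H] [Fintype H] [DecidableEq H]
    (h : ℕ) (hp : Nat.Prime h)
    (ψ : Cocyc H h) :
    IsBH (Fintype.card H) h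
        (Matrix.of fun a b : H => zeta h ^ (ψ.f a b).val)
      ↔ IsRDS (Subgroup.zpowers (⟨1, 1⟩ : Cocyc.Ext ψ))
          (Set.range fun x : H => (⟨0, x⟩ : Cocyc.Ext ψ))
          (Fintype.card H) h (Fintype.card H) (Fintype.card H / h) := by
  have := Fact.mk hp
  rw [ψ.isBH_iff, Cocyc.Ext.isRDS_iff]
  exact forall₂_congr fun g _ => ZMod.sum_stdAddChar_eq_zero_iff _

/-- for a finite group `H` of order divisible by a prime `h`,
a cocycle `ψ ∈ Z²(H,⟨ζ_h⟩)` is orthogonal (`M_ψ ∈ BH(|H|,h)`) iff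
`{(1,x) : x ∈ H}` is a `(|H|, h, |H|, |H|/h)`-relative difference set in `E_ψ`
with forbidden subgroup `⟨(ζ_h,1)⟩`. -/
theorem orthogonal_iff_RDS
    {H : Type*} [Group H] [Fintype H] [DecidableEq H]
    (h : ℕ) (hp : Nat.Prime h) (hdvd : h ∣ Fintype.card H)
    (ψ : Cocyc H h) :
    IsBH (Fintype.card H) h
        (Matrix.of fun a b : H => zeta h ^ (ψ.f a b).val)
      ↔ IsRDS (Subgroup.zpowers (⟨1, 1⟩ : Cocyc.Ext ψ))
          (Set.range fun x : H => (⟨0, x⟩ : Cocyc.Ext ψ))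
          (Fintype.card H) h (Fintype.card H) (Fintype.card H / h) :=
  orthogonal_iff_RDS_general h hp ψ
end
end

section
/- Let G_s and G_t be finite abelian groups and G = G_s × G_t. Suppose ψ·∂φ_s ∈ Z²(G_s, ⟨ζ_{k₁}⟩) and ρ·∂φ_t ∈ Z²(G_t, ⟨ζ_{k₂}⟩) are orthogonal cocycles, and let k = lcm(k₁, k₂). Define φ on G by φ(g_s, g_t) = φ_s(g_s)·φ_t(g_t), and define the cocycle ϝ ∈ Z²(G, ⟨ζ_k⟩) by ϝ((g_s,g_t),(h_s,h_t)) = ψ(g_s,h_s)·ρ(g_t,h_t). Then ϝ·∂φ ∈ Z²(G, ⟨ζ_k⟩) is orthogonal, and its cocyclic matrix M_{ϝ·∂φ} equals the Kronecker product M_{ψ·∂φ_s} ⊗ M_{ρ·∂φ_t}. -/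
open scoped BigOperators

noncomputable section

/-- The coboundary `∂φ(a,b) = φ(a)⁻¹ φ(b)⁻¹ φ(a+b)` of a (normalized) map `φ : G → ℂ`. -/
def cob {G : Type*} [AddGroup G] (φ : G → ℂ) (a b : G) : ℂ :=
  (φ a)⁻¹ * (φ b)⁻¹ * φ (a + b)

/-- `f` is a normalized 2-cocycle over the (additive) group `G`. -/
def IsCocycle {G : Type*} [AddGroup G] (f : G → G → ℂ) : Prop :=
  (∀ a b c, f a b * f (a + b) c = f a (b + c) * f b c) ∧ f 0 0 = 1

lemma zeta_dvd_pow {k₁ k : ℕ} (hk₁ : 0 < k₁) (hk : 0 < k) (hd : k₁ ∣ k) :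
    zeta k₁ = zeta k ^ (k / k₁) := by
  obtain ⟨m, rfl⟩ := hd
  have hm : m ≠ 0 := by rintro rfl; simp at hk
  rw [Nat.mul_div_cancel_left _ hk₁]
  unfold zeta
  rw [← Complex.exp_nat_mul]
  congr 1
  have h1 : (k₁ : ℂ) ≠ 0 := Nat.cast_ne_zero.2 hk₁.ne'
  have h2 : (m : ℂ) ≠ 0 := Nat.cast_ne_zero.2 hm
  push_cast
  field_simp

lemma kron_conjT {l m : Type*} [Fintype l] [Fintype m] (A : Matrix l l ℂ) (B : Matrix m m ℂ) :
    (Matrix.kroneckerMap (· * ·) A B).conjTranspose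
      = Matrix.kroneckerMap (· * ·) A.conjTranspose B.conjTranspose := by
  ext p q
  simp [Matrix.conjTranspose_apply, Matrix.kroneckerMap_apply]

/-- if `ψ·∂φ_s ∈ Z²(G_s,⟨ζ_{k₁}⟩)` and `ρ·∂φ_t ∈ Z²(G_t,⟨ζ_{k₂}⟩)`
are orthogonal cocycles and `k = lcm(k₁,k₂)`, then with
`φ(g_s,g_t) = φ_s(g_s)·φ_t(g_t)` and `ϝ((g_s,g_t),(h_s,h_t)) = ψ(g_s,h_s)·ρ(g_t,h_t)`,
the cocycle `ϝ·∂φ ∈ Z²(G_s × G_t, ⟨ζ_k⟩)` is orthogonal, and its cocyclic matrix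
is the Kronecker product `M_{ψ·∂φ_s} ⊗ M_{ρ·∂φ_t}`. -/
theorem kronecker_orthogonal
    (G₁ G₂ : Type*) [AddCommGroup G₁] [Fintype G₁] [DecidableEq G₁]
    [AddCommGroup G₂] [Fintype G₂] [DecidableEq G₂]
    (k₁ k₂ : ℕ) (hk₁ : 0 < k₁) (hk₂ : 0 < k₂)
    (ψ : G₁ → G₁ → ℂ) (ρ : G₂ → G₂ → ℂ) (φs : G₁ → ℂ) (φt : G₂ → ℂ)
    (hφs : φs 0 = 1) (hφt : φt 0 = 1)
    (h₁coc : IsCocycle (fun a b => ψ a b * cob φs a b))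
    (h₂coc : IsCocycle (fun a b => ρ a b * cob φt a b))
    (h₁BH : IsBH (Fintype.card G₁) k₁ (Matrix.of fun a b => ψ a b * cob φs a b))
    (h₂BH : IsBH (Fintype.card G₂) k₂ (Matrix.of fun a b => ρ a b * cob φt a b)) :
    IsCocycle (fun p q : G₁ × G₂ =>
        (ψ p.1 q.1 * ρ p.2 q.2) * cob (fun r : G₁ × G₂ => φs r.1 * φt r.2) p q)
    ∧ IsBH (Fintype.card (G₁ × G₂)) (Nat.lcm k₁ k₂)
        (Matrix.of fun p q : G₁ × G₂ =>
          (ψ p.1 q.1 * ρ p.2 q.2) * cob (fun r : G₁ × G₂ => φs r.1 * φt r.2) p q)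
    ∧ (Matrix.of fun p q : G₁ × G₂ =>
          (ψ p.1 q.1 * ρ p.2 q.2) * cob (fun r : G₁ × G₂ => φs r.1 * φt r.2) p q)
        = Matrix.kroneckerMap (· * ·)
            (Matrix.of fun a b => ψ a b * cob φs a b)
            (Matrix.of fun a b => ρ a b * cob φt a b) := by
  set A : Matrix G₁ G₁ ℂ := Matrix.of fun a b => ψ a b * cob φs a b with hA
  set B : Matrix G₂ G₂ ℂ := Matrix.of fun a b => ρ a b * cob φt a b with hB
  have hfac : ∀ p q : G₁ × G₂,
      (ψ p.1 q.1 * ρ p.2 q.2) * cob (fun r : G₁ × G₂ => φs r.1 * φt r.2) p q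
        = (ψ p.1 q.1 * cob φs p.1 q.1) * (ρ p.2 q.2 * cob φt p.2 q.2) := by
    intro p q
    simp only [cob, Prod.fst_add, Prod.snd_add, mul_inv]
    ring
  have hmat : (Matrix.of fun p q : G₁ × G₂ =>
      (ψ p.1 q.1 * ρ p.2 q.2) * cob (fun r : G₁ × G₂ => φs r.1 * φt r.2) p q)
      = Matrix.kroneckerMap (· * ·) A B := by
    ext p q
    simpa [hA, hB] using hfac p q
  refine ⟨?_, ?_, hmat⟩
  · constructor
    · intro a b c
      simp only [hfac]
      have h1 := h₁coc.1 a.1 b.1 c.1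
      have h2 := h₂coc.1 a.2 b.2 c.2
      simp only at h1 h2
      calc (ψ a.1 b.1 * cob φs a.1 b.1) * (ρ a.2 b.2 * cob φt a.2 b.2) *
            ((ψ (a+b).1 c.1 * cob φs (a+b).1 c.1) * (ρ (a+b).2 c.2 * cob φt (a+b).2 c.2))
          = ((ψ a.1 b.1 * cob φs a.1 b.1) * (ψ (a.1+b.1) c.1 * cob φs (a.1+b.1) c.1)) *
            ((ρ a.2 b.2 * cob φt a.2 b.2) * (ρ (a.2+b.2) c.2 * cob φt (a.2+b.2) c.2)) := by
            simp only [Prod.fst_add, Prod.snd_add]; ring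
        _ = ((ψ a.1 (b.1+c.1) * cob φs a.1 (b.1+c.1)) * (ψ b.1 c.1 * cob φs b.1 c.1)) *
            ((ρ a.2 (b.2+c.2) * cob φt a.2 (b.2+c.2)) * (ρ b.2 c.2 * cob φt b.2 c.2)) := by
            rw [h1, h2]
        _ = _ := by simp only [Prod.fst_add, Prod.snd_add]; ring
    · have h1 := h₁coc.2
      have h2 := h₂coc.2
      simp only at h1 h2 ⊢
      have h3 := hfac 0 0
      simp only [Prod.fst_zero, Prod.snd_zero] at h3 ⊢
      rw [h3, h1, h2, mul_one]
  · obtain ⟨hc1, he1, ho1⟩ := h₁BH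
    obtain ⟨hc2, he2, ho2⟩ := h₂BH
    have hk : 0 < Nat.lcm k₁ k₂ := Nat.pos_of_ne_zero (Nat.lcm_ne_zero hk₁.ne' hk₂.ne')
    have hz1 : zeta k₁ = zeta (Nat.lcm k₁ k₂) ^ (Nat.lcm k₁ k₂ / k₁) :=
      zeta_dvd_pow hk₁ hk (Nat.dvd_lcm_left _ _)
    have hz2 : zeta k₂ = zeta (Nat.lcm k₁ k₂) ^ (Nat.lcm k₁ k₂ / k₂) :=
      zeta_dvd_pow hk₂ hk (Nat.dvd_lcm_right _ _)
    refine ⟨rfl, ?_, ?_⟩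
    · intro a b
      obtain ⟨j, hj⟩ := he1 a.1 b.1
      obtain ⟨j', hj'⟩ := he2 a.2 b.2
      refine ⟨Nat.lcm k₁ k₂ / k₁ * j + Nat.lcm k₁ k₂ / k₂ * j', ?_⟩
      have hj2 : ψ a.1 b.1 * cob φs a.1 b.1 = zeta k₁ ^ j := hj
      have hj2' : ρ a.2 b.2 * cob φt a.2 b.2 = zeta k₂ ^ j' := hj'
      simp only [Matrix.of_apply]
      rw [hfac a b, hj2, hj2', hz1, hz2, ← pow_mul, ← pow_mul, ← pow_add]
    · rw [hmat, kron_conjT, ← Matrix.mul_kronecker_mul, ho1, ho2,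
        Matrix.smul_kronecker, Matrix.kronecker_smul, Matrix.one_kronecker_one,
        smul_smul, Fintype.card_prod]
      push_cast
      ring_nf

end
end
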